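/- arXiv:2605.15925 — 9 statements merged into one kernel-verified Lean document; each statement's English description precedes it below -/
import Mathlib

section
/- Let p be an odd prime, m, k ∈ ℕ, and R_k = 𝔽_{p^m}[u]/⟨u^k⟩. A map Φ : R_k → R_k is a ring automorphism if and only if there exist a field automorphism θ of 𝔽_{p^m} and a unit η ∈ R_k^* such that Φ(∑_{i=0}^{k−1} a_i u^i) = ∑_{i=0}^{k−1} θ(a_i) η^i u^i for all a_0, …, a_{k−1} ∈ 𝔽_{p^m}. -/
open Polynomial

/-- `Rk p m k` is the finite chain ring `𝔽_{p^m}[u]/⟨u^k⟩`. -/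
noncomputable abbrev Rk (p m k : ℕ) [Fact p.Prime] : Type _ :=
  AdjoinRoot (X ^ k : (GaloisField p m)[X])

/-- `uRk p m k` is the image `u` of the variable in `𝔽_{p^m}[u]/⟨u^k⟩`. -/
noncomputable abbrev uRk (p m k : ℕ) [Fact p.Prime] : Rk p m k :=
  AdjoinRoot.root _

/-- `ofFq p m k` is the canonical embedding `𝔽_{p^m} → 𝔽_{p^m}[u]/⟨u^k⟩`. -/
noncomputable abbrev ofFq (p m k : ℕ) [Fact p.Prime] :
    GaloisField p m →+* Rk p m k :=
  AdjoinRoot.of _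

namespace Stmt0Aux

variable (p m k : ℕ) [Fact p.Prime]

lemma u_pow_k : uRk p m k ^ k = 0 := by
  rw [show uRk p m k = AdjoinRoot.mk _ X from (AdjoinRoot.mk_X).symm, ← map_pow]
  exact AdjoinRoot.mk_self

variable {k}

lemma u_pow_ne {j : ℕ} (hj : j < k) : uRk p m k ^ j ≠ 0 := by
  intro h0
  rw [show uRk p m k = AdjoinRoot.mk _ X from (AdjoinRoot.mk_X).symm, ← map_pow,
    AdjoinRoot.mk_eq_zero] at h0
  revert h0
  intro h
  have := Polynomial.natDegree_le_of_dvd h (pow_ne_zero _ X_ne_zero)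
  simp [Polynomial.natDegree_X_pow] at this
  omega

lemma nontrivialRk (hk : 0 < k) : Nontrivial (Rk p m k) := by
  refine nontrivial_of_ne 1 0 ?_
  simpa using u_pow_ne p m (j := 0) hk

lemma ofFq_injective (hk : 0 < k) : Function.Injective (ofFq p m k) := by
  haveI := nontrivialRk p m hk
  exact (ofFq p m k).injective

lemma rep_exists (hk : 0 < k) (x : Rk p m k) :
    ∃ a : Fin k → GaloisField p m,
      x = ∑ i : Fin k, ofFq p m k (a i) * uRk p m k ^ (i : ℕ) := by
  obtain ⟨P, rfl⟩ := AdjoinRoot.mk_surjective x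
  haveI := nontrivialRk p m hk
  set P' := P %ₘ (X ^ k) with hP'
  refine ⟨fun i => P'.coeff i, ?_⟩
  have hmk : AdjoinRoot.mk (X ^ k : (GaloisField p m)[X]) P = AdjoinRoot.mk _ P' := by
    conv_lhs => rw [← Polynomial.modByMonic_add_div P (X ^ k)]
    rw [map_add, map_mul, AdjoinRoot.mk_self, zero_mul, add_zero]
  have hdeg : P'.natDegree < k := by
    have := Polynomial.degree_modByMonic_lt P (monic_X_pow k (R := GaloisField p m))
    rw [Polynomial.degree_X_pow] at this
    by_cases h0 : P' = 0
    · simpa [h0] using hk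
    · exact Polynomial.natDegree_lt_iff_degree_lt h0 |>.mpr this
  rw [hmk, ← AdjoinRoot.aeval_eq, Polynomial.aeval_eq_sum_range' hdeg,
    Finset.sum_range]
  refine Finset.sum_congr rfl fun i _ => ?_
  rw [Algebra.smul_def, AdjoinRoot.algebraMap_eq]

lemma mk_unit (hk : 0 < k) {Q : (GaloisField p m)[X]} (hQ : Q.coeff 0 ≠ 0) :
    IsUnit (AdjoinRoot.mk (X ^ k : (GaloisField p m)[X]) Q) := by
  have hdec : AdjoinRoot.mk (X ^ k : (GaloisField p m)[X]) Q
      = ofFq p m k (Q.coeff 0) + uRk p m k * AdjoinRoot.mk _ Q.divX := by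
    conv_lhs => rw [← Polynomial.X_mul_divX_add Q]
    rw [map_add, map_mul, AdjoinRoot.mk_X, add_comm, AdjoinRoot.mk_C]
  rw [hdec]
  refine IsNilpotent.isUnit_add_left_of_commute ⟨k, ?_⟩
    ((isUnit_iff_ne_zero.mpr hQ).map _) (Commute.all _ _)
  rw [mul_pow, u_pow_k, zero_mul]

lemma chain (x : Rk p m k) (hx : x ≠ 0) :
    ∃ j : ℕ, j < k ∧ ∃ w : Rk p m k, IsUnit w ∧ x = uRk p m k ^ j * w := by
  obtain ⟨P, rfl⟩ := AdjoinRoot.mk_surjective x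
  have hndvd : ¬ (X ^ k : (GaloisField p m)[X]) ∣ P := fun h =>
    hx (AdjoinRoot.mk_eq_zero.mpr h)
  have hP0 : P ≠ 0 := fun h => hndvd (h ▸ dvd_zero _)
  set j := P.natTrailingDegree with hj
  have hXj : (X : (GaloisField p m)[X]) ^ j ∣ P :=
    Polynomial.X_pow_dvd_iff.mpr fun d hd =>
      Polynomial.coeff_eq_zero_of_lt_natTrailingDegree hd
  obtain ⟨Q, hQ⟩ := hXj
  have hQ0 : Q.coeff 0 ≠ 0 := by
    have h1 : P.coeff j ≠ 0 := Polynomial.coeff_natTrailingDegree_ne_zero.mpr hP0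
    have h2 : (X ^ j * Q).coeff j ≠ 0 := by rwa [hQ] at h1
    have h3 : (X ^ j * Q).coeff (0 + j) = Q.coeff 0 := Polynomial.coeff_X_pow_mul Q j 0
    rw [zero_add] at h3
    rwa [h3] at h2
  have hjk : j < k := by
    by_contra h
    exact hndvd (dvd_trans (pow_dvd_pow X (le_of_not_gt h)) (hQ ▸ Dvd.intro _ rfl))
  refine ⟨j, hjk, AdjoinRoot.mk _ Q, mk_unit p m (Nat.pos_of_ne_zero (by omega)) hQ0, ?_⟩
  rw [hQ, map_mul, map_pow, AdjoinRoot.mk_X]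

lemma decomp (x : Rk p m k) :
    ∃ (a : GaloisField p m) (y : Rk p m k), x = ofFq p m k a + uRk p m k * y := by
  obtain ⟨P, rfl⟩ := AdjoinRoot.mk_surjective x
  refine ⟨P.coeff 0, AdjoinRoot.mk _ P.divX, ?_⟩
  conv_lhs => rw [← Polynomial.X_mul_divX_add P]
  rw [map_add, map_mul, AdjoinRoot.mk_X, add_comm, AdjoinRoot.mk_C]

lemma nil_mem (hk : 0 < k) {x : Rk p m k} (hx : IsNilpotent x) :
    ∃ y : Rk p m k, x = uRk p m k * y := by
  obtain ⟨a, y, rfl⟩ := decomp p m x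
  have hn : IsNilpotent (uRk p m k * y) := ⟨k, by rw [mul_pow, u_pow_k, zero_mul]⟩
  have ha : IsNilpotent (ofFq p m k a) := by
    have := Commute.isNilpotent_sub (Commute.all _ _) hx hn
    simpa using this
  obtain ⟨N, hN⟩ := ha
  rw [← map_pow] at hN
  have ha0 : a = 0 := by
    have : a ^ N = 0 := ofFq_injective p m hk (by simpa using hN)
    exact (pow_eq_zero_iff'.mp this).1
  exact ⟨y, by rw [ha0, map_zero, zero_add]⟩

lemma charP_Rk (hk : 0 < k) : CharP (Rk p m k) p :=
  charP_of_injective_ringHom (ofFq_injective p m hk) p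

lemma pow_q_self (hm : 0 < m) (a : GaloisField p m) : a ^ p ^ m = a := by
  haveI : Fintype (GaloisField p m) := Fintype.ofFinite _
  have h := FiniteField.pow_card a
  rwa [← Nat.card_eq_fintype_card, GaloisField.card p m hm.ne'] at h

lemma mem_range_iff (hm : 0 < m) (hk : 0 < k) (x : Rk p m k) :
    x ^ p ^ m = x ↔ ∃ a : GaloisField p m, x = ofFq p m k a := by
  constructor
  · intro hx
    obtain ⟨a, y, rfl⟩ := decomp p m x
    haveI := charP_Rk p m hk
    set n := uRk p m k * y with hn
    have key : (ofFq p m k a + n) ^ p ^ m = ofFq p m k a + n ^ p ^ m := by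
      rw [add_pow_char_pow, ← map_pow, pow_q_self p m hm]
    rw [key] at hx
    have hnn : n ^ p ^ m = n := add_left_cancel hx
    -- n is nilpotent with n^k = 0; iterate to kill n
    have hnk : n ^ k = 0 := by rw [hn, mul_pow, u_pow_k, zero_mul]
    have hiter : ∀ j : ℕ, n ^ (p ^ m) ^ j = n := by
      intro j
      induction j with
      | zero => simp
      | succ j ih => rw [pow_succ, pow_mul, ih, hnn]
    have hq2 : 2 ≤ p ^ m := by
      have hp2 : 2 ≤ p := (Fact.out : p.Prime).two_le
      calc 2 ≤ p := hp2
        _ = p ^ 1 := (pow_one p).symm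
        _ ≤ p ^ m := Nat.pow_le_pow_right (by omega) hm
    have hbig : k ≤ (p ^ m) ^ k := le_of_lt (Nat.lt_pow_self (n := k) (by omega))
    have hn0 : n = 0 := by
      have : n ^ (p ^ m) ^ k = 0 := by
        rw [← Nat.sub_add_cancel hbig, pow_add, hnk, mul_zero]
      rw [hiter k] at this
      exact this
    exact ⟨a, by rw [hn0, add_zero]⟩
  · rintro ⟨a, rfl⟩
    rw [← map_pow, pow_q_self p m hm]

lemma finiteRk (hk : 0 < k) : Finite (Rk p m k) :=
  Finite.of_surjective
    (fun a : Fin k → GaloisField p m =>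
      ∑ i : Fin k, ofFq p m k (a i) * uRk p m k ^ (i : ℕ))
    (fun x => (rep_exists p m hk x).imp fun _ ha => ha.symm)

lemma ann_u (hk2 : 2 ≤ k) {z : Rk p m k} (hz : uRk p m k * z = 0) :
    ∃ w : Rk p m k, z = uRk p m k ^ (k - 1) * w := by
  obtain ⟨P, rfl⟩ := AdjoinRoot.mk_surjective z
  have hdvd : (X ^ k : (GaloisField p m)[X]) ∣ X * P := by
    rw [← AdjoinRoot.mk_eq_zero, map_mul, AdjoinRoot.mk_X]
    exact hz
  obtain ⟨Q, hQ⟩ := hdvd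
  have hk1 : k = (k - 1) + 1 := by omega
  have hP : P = X ^ (k - 1) * Q := by
    apply mul_left_cancel₀ (X_ne_zero (R := GaloisField p m))
    rw [hQ]
    conv_lhs => rw [hk1]
    rw [pow_succ]
    ring
  exact ⟨AdjoinRoot.mk _ Q, by rw [hP, map_mul, map_pow, AdjoinRoot.mk_X]⟩

lemma exists_eta (hk : 0 < k) (e : Rk p m k ≃+* Rk p m k) :
    ∃ η : (Rk p m k)ˣ, e (uRk p m k) = (η : Rk p m k) * uRk p m k := by
  haveI := nontrivialRk p m hk
  rcases eq_or_lt_of_le (show 1 ≤ k from hk) with hk1 | hk2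
  · -- k = 1, so u = 0
    have hu0 : uRk p m k = 0 := by
      rw [show uRk p m k = AdjoinRoot.mk _ X from (AdjoinRoot.mk_X).symm,
        AdjoinRoot.mk_eq_zero, ← hk1, pow_one]
    exact ⟨1, by rw [hu0, map_zero, mul_zero]⟩
  · have hk2' : 2 ≤ k := hk2
    obtain ⟨c, hc⟩ := nil_mem p m hk
      (x := e (uRk p m k)) ⟨k, by rw [← map_pow, u_pow_k, map_zero]⟩
    obtain ⟨d, hd⟩ := nil_mem p m hk
      (x := e.symm (uRk p m k)) ⟨k, by rw [← map_pow, u_pow_k, map_zero]⟩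
    have hu : uRk p m k = uRk p m k * c * e d := by
      conv_lhs => rw [← e.apply_symm_apply (uRk p m k), hd, map_mul, hc]
    have hz : uRk p m k * (1 - c * e d) = 0 := by
      have h1 : uRk p m k * (1 - c * e d) = uRk p m k - uRk p m k * c * e d := by ring
      rw [h1, ← hu]
      exact sub_self _
    obtain ⟨w, hw⟩ := ann_u p m hk2' hz
    have hnil : IsNilpotent (-(uRk p m k ^ (k - 1) * w)) := by
      refine (IsNilpotent.neg ?_)
      refine ⟨2, ?_⟩
      have h4 : (uRk p m k ^ (k - 1) * w) ^ 2
          = uRk p m k ^ ((k - 1) + (k - 1)) * w ^ 2 := by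
        rw [pow_add]; ring
      rw [h4, show (k - 1) + (k - 1) = k + (k - 2) by omega, pow_add, u_pow_k,
        zero_mul, zero_mul]
    have hcu : IsUnit (c * e d) := by
      have h1 : c * e d = 1 + -(uRk p m k ^ (k - 1) * w) := by
        rw [← hw]; ring
      rw [h1]
      exact IsNilpotent.isUnit_add_left_of_commute hnil isUnit_one (Commute.all _ _)
    have hcunit : IsUnit c := isUnit_of_mul_isUnit_left hcu
    exact ⟨hcunit.unit, by rw [hc, hcunit.unit_spec, mul_comm]⟩

lemma exists_theta (hm : 0 < m) (hk : 0 < k) (e : Rk p m k ≃+* Rk p m k) :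
    ∃ θ : GaloisField p m ≃+* GaloisField p m,
      ∀ a : GaloisField p m, e (ofFq p m k a) = ofFq p m k (θ a) := by
  have hex : ∀ a : GaloisField p m, ∃ b, e (ofFq p m k a) = ofFq p m k b := by
    intro a
    refine (mem_range_iff p m hm hk _).mp ?_
    rw [← map_pow, ← map_pow, pow_q_self p m hm]
  choose θ₀ hθ₀ using hex
  have hinj := ofFq_injective p m hk
  have θinj : Function.Injective θ₀ := by
    intro a b h
    apply hinj
    apply e.injective
    rw [hθ₀, hθ₀, h]
  let θhom : GaloisField p m →+* GaloisField p m :=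
    { toFun := θ₀
      map_one' := hinj <| by
        calc ofFq p m k (θ₀ 1) = e (ofFq p m k 1) := (hθ₀ _).symm
          _ = 1 := by rw [map_one, map_one]
          _ = ofFq p m k 1 := (map_one _).symm
      map_mul' := fun a b => hinj <| by
        calc ofFq p m k (θ₀ (a * b)) = e (ofFq p m k (a * b)) := (hθ₀ _).symm
          _ = e (ofFq p m k a) * e (ofFq p m k b) := by rw [map_mul, map_mul]
          _ = ofFq p m k (θ₀ a) * ofFq p m k (θ₀ b) := by rw [hθ₀, hθ₀]
          _ = ofFq p m k (θ₀ a * θ₀ b) := (map_mul _ _ _).symm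
      map_zero' := hinj <| by
        calc ofFq p m k (θ₀ 0) = e (ofFq p m k 0) := (hθ₀ _).symm
          _ = 0 := by rw [map_zero, map_zero]
          _ = ofFq p m k 0 := (map_zero _).symm
      map_add' := fun a b => hinj <| by
        calc ofFq p m k (θ₀ (a + b)) = e (ofFq p m k (a + b)) := (hθ₀ _).symm
          _ = e (ofFq p m k a + ofFq p m k b) := by rw [map_add]
          _ = e (ofFq p m k a) + e (ofFq p m k b) := map_add e _ _
          _ = ofFq p m k (θ₀ a) + ofFq p m k (θ₀ b) := by rw [hθ₀, hθ₀]
          _ = ofFq p m k (θ₀ a + θ₀ b) := (map_add _ _ _).symm }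
  exact ⟨RingEquiv.ofBijective θhom (Finite.injective_iff_bijective.mp θinj),
    fun a => hθ₀ a⟩

lemma exists_hom (hk : 0 < k) (θ : GaloisField p m ≃+* GaloisField p m)
    (η : (Rk p m k)ˣ) :
    ∃ F : Rk p m k →+* Rk p m k, Function.Bijective F ∧
      (∀ a, F (ofFq p m k a) = ofFq p m k (θ a)) ∧
      F (uRk p m k) = (η : Rk p m k) * uRk p m k := by
  haveI := finiteRk p m hk
  have h : (X ^ k : (GaloisField p m)[X]).eval₂
      ((ofFq p m k).comp (θ : GaloisField p m →+* GaloisField p m))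
      ((η : Rk p m k) * uRk p m k) = 0 := by
    rw [eval₂_X_pow, mul_pow, u_pow_k, mul_zero]
  refine ⟨AdjoinRoot.lift _ _ h, ?_, fun a => AdjoinRoot.lift_of h,
    AdjoinRoot.lift_root h⟩
  set F := AdjoinRoot.lift _ _ h with hF
  have hFinj : Function.Injective F := by
    rw [injective_iff_map_eq_zero]
    intro x hx
    by_contra hx0
    obtain ⟨j, hj, w, hw, rfl⟩ := chain p m x hx0
    rw [map_mul, map_pow, AdjoinRoot.lift_root h, mul_pow] at hx
    have hcu : IsUnit ((η : Rk p m k) ^ j * F w) := ((η ^ j).isUnit).mul (hw.map F)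
    have hx2 : uRk p m k ^ j * ((η : Rk p m k) ^ j * F w) = 0 := by
      rw [← hx]; ring
    have h3 : (η : Rk p m k) ^ j * F w * ↑hcu.unit⁻¹ = 1 := by
      have := Units.mul_inv hcu.unit
      rwa [hcu.unit_spec] at this
    have h0 : uRk p m k ^ j = 0 := by
      calc uRk p m k ^ j = uRk p m k ^ j * ((η : Rk p m k) ^ j * F w * ↑hcu.unit⁻¹) := by
            rw [h3, mul_one]
        _ = uRk p m k ^ j * ((η : Rk p m k) ^ j * F w) * ↑hcu.unit⁻¹ := by ring
        _ = 0 := by rw [hx2, zero_mul]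
    exact u_pow_ne p m hj h0
  exact Finite.injective_iff_bijective.mp hFinj

end Stmt0Aux

/-- A map `Φ : R_k → R_k` is a ring automorphism if and only if there exist a field
automorphism `θ` of `𝔽_{p^m}` and a unit `η ∈ R_k^*` such that
`Φ(∑ aᵢ uⁱ) = ∑ θ(aᵢ) ηⁱ uⁱ`. -/
theorem stmt_0 (p m k : ℕ) [Fact p.Prime] (hp : Odd p) (hm : 0 < m) (hk : 0 < k)
    (Φ : Rk p m k → Rk p m k) :
    (∃ e : Rk p m k ≃+* Rk p m k, ⇑e = Φ) ↔
      ∃ (θ : GaloisField p m ≃+* GaloisField p m) (η : (Rk p m k)ˣ),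
        ∀ a : Fin k → GaloisField p m,
          Φ (∑ i : Fin k, ofFq p m k (a i) * uRk p m k ^ (i : ℕ)) =
            ∑ i : Fin k, ofFq p m k (θ (a i)) * (η : Rk p m k) ^ (i : ℕ) *
              uRk p m k ^ (i : ℕ) := by
  constructor
  · rintro ⟨e, rfl⟩
    obtain ⟨η, hη⟩ := Stmt0Aux.exists_eta p m hk e
    obtain ⟨θ, hθ⟩ := Stmt0Aux.exists_theta p m hm hk e
    refine ⟨θ, η, fun a => ?_⟩
    rw [map_sum]
    refine Finset.sum_congr rfl fun i _ => ?_
    rw [map_mul, map_pow, hη, hθ, mul_pow]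
    ring
  · rintro ⟨θ, η, hΦ⟩
    obtain ⟨F, hFbij, hFof, hFu⟩ := Stmt0Aux.exists_hom p m hk θ η
    refine ⟨RingEquiv.ofBijective F hFbij, funext fun x => ?_⟩
    obtain ⟨a, rfl⟩ := Stmt0Aux.rep_exists p m hk x
    rw [RingEquiv.ofBijective_apply, hΦ a, map_sum]
    refine Finset.sum_congr rfl fun i _ => ?_
    rw [map_mul, map_pow, hFu, hFof, mul_pow]
    ring
end

section
/- Let p be an odd prime with p ≠ 3, let m, k, s ∈ ℕ, and let Θ be a ring automorphism of R_k = 𝔽_{p^m}[u]/⟨u^k⟩ whose order divides p^s. If λ₀ ∈ R_k^* is a unit such that Θ(λ₀) = λ₀ and λ₀ = δ^3 for some δ ∈ R_k^*, then Θ(δ) = δ. -/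
open Polynomial

/-- The residue map `R_k → 𝔽_{p^m}`, evaluation at `0`. -/
noncomputable def resid (p m k : ℕ) [Fact p.Prime] (hk : 0 < k) :
    Rk p m k →+* GaloisField p m :=
  AdjoinRoot.lift (RingHom.id _) 0 (by simp [zero_pow hk.ne'])

lemma resid_nilpotent (p m k : ℕ) [Fact p.Prime] (hk : 0 < k) (x : Rk p m k)
    (h : resid p m k hk x = 0) : IsNilpotent x := by
  obtain ⟨f, rfl⟩ := AdjoinRoot.mk_surjective x
  have hco : f.coeff 0 = 0 := by
    have := h
    rw [resid, AdjoinRoot.lift_mk] at this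
    simpa [eval₂_eq_eval_map, Polynomial.eval_zero, Polynomial.coeff_zero_eq_eval_zero]
      using this
  obtain ⟨g, rfl⟩ := Polynomial.X_dvd_iff.2 hco
  have hroot : IsNilpotent (AdjoinRoot.mk (X ^ k : (GaloisField p m)[X]) X) := by
    refine ⟨k, ?_⟩
    rw [← map_pow, AdjoinRoot.mk_self]
  rw [map_mul]
  exact (Commute.all _ _).isNilpotent_mul_right hroot

lemma three_isUnit (p m k : ℕ) [Fact p.Prime] (hp3 : p ≠ 3) :
    IsUnit (3 : Rk p m k) := by
  have hpp : p.Prime := Fact.out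
  have h3 : (3 : GaloisField p m) ≠ 0 := by
    rw [show ((3 : GaloisField p m)) = ((3 : ℕ) : GaloisField p m) by norm_cast]
    rw [Ne, CharP.cast_eq_zero_iff (GaloisField p m) p 3]
    intro hdvd
    exact hp3 ((Nat.prime_dvd_prime_iff_eq hpp (by norm_num)).1 hdvd)
  have := (isUnit_iff_ne_zero.2 h3).map (algebraMap (GaloisField p m) (Rk p m k))
  rwa [map_ofNat] at this

/-- A cube root of unity congruent to `1` modulo nilpotents equals `1` (when `p ≠ 3`). -/
lemma cube_root_near_one (p m k : ℕ) [Fact p.Prime] (hp3 : p ≠ 3)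
    {z : Rk p m k} (hz : z ^ 3 = 1) (hn : IsNilpotent (z - 1)) : z = 1 := by
  set n := z - 1 with hndef
  have key : n * (n ^ 2 + 3 * n + 3) = 0 := by
    rw [hndef]; linear_combination hz
  have hnil : IsNilpotent (n ^ 2 + 3 * n) := by
    have : n ^ 2 + 3 * n = n * (n + 3) := by ring
    rw [this]
    exact (Commute.all _ _).isNilpotent_mul_right hn
  have hu : IsUnit (n ^ 2 + 3 * n + 3) :=
    hnil.isUnit_add_right_of_commute (three_isUnit p m k hp3) (Commute.all _ _)
  have hn0 : n = 0 := (hu.mul_left_eq_zero.1 key)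
  have := sub_eq_zero.1 (hndef ▸ hn0)
  exact this

/-- Two cube roots of unity with the same residue are equal. -/
lemma cube_root_eq_of_resid_eq (p m k : ℕ) [Fact p.Prime] (hp3 : p ≠ 3) (hk : 0 < k)
    {x y : Rk p m k} (hx : x ^ 3 = 1) (hy : y ^ 3 = 1)
    (hr : resid p m k hk x = resid p m k hk y) : x = y := by
  have hz3 : (x * y ^ 2) ^ 3 = 1 := by
    have : (x * y ^ 2) ^ 3 = x ^ 3 * (y ^ 3) ^ 2 := by ring
    rw [this, hx, hy, one_pow, one_mul]
  have hnil : IsNilpotent (x * y ^ 2 - 1) := by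
    have heq : x * y ^ 2 - 1 = (x - y) * y ^ 2 := by linear_combination hy
    rw [heq]
    refine (Commute.all _ _).isNilpotent_mul_right ?_
    refine resid_nilpotent p m k hk _ ?_
    rw [map_sub, hr, sub_self]
  have h1 : x * y ^ 2 = 1 := cube_root_near_one p m k hp3 hz3 hnil
  calc x = x * y ^ 2 * y := by rw [mul_assoc, ← pow_succ, hy, mul_one]
    _ = y := by rw [h1, one_mul]

/-- In a field, any cube root of unity is `1`, `a` or `a²` where `a` is a
nontrivial cube root of unity. -/
lemma field_cube_roots {F : Type*} [Field F] {a c : F} (ha : a ^ 3 = 1) (ha1 : a ≠ 1)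
    (hc : c ^ 3 = 1) : c = 1 ∨ c = a ∨ c = a ^ 2 := by
  have hs : a ^ 2 + a + 1 = 0 := by
    have h0 : (a - 1) * (a ^ 2 + a + 1) = 0 := by linear_combination ha
    rcases mul_eq_zero.1 h0 with h | h
    · exact absurd (sub_eq_zero.1 h) ha1
    · exact h
  have h0 : (c - 1) * (c - a) * (c - a ^ 2) = 0 := by
    linear_combination hc + (c - c ^ 2) * hs + (c - 1) * ha
  rcases mul_eq_zero.1 h0 with h | h
  · rcases mul_eq_zero.1 h with h | h
    · exact Or.inl (sub_eq_zero.1 h)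
    · exact Or.inr (Or.inl (sub_eq_zero.1 h))
  · exact Or.inr (Or.inr (sub_eq_zero.1 h))

/-- Let `p` be an odd prime with `p ≠ 3` and let `Θ` be a ring automorphism of
`R_k = 𝔽_{p^m}[u]/⟨u^k⟩` whose order divides `p^s`. If `λ₀ ∈ R_k^*` is a unit with
`Θ(λ₀) = λ₀` and `λ₀ = δ³` for some unit `δ`, then `Θ(δ) = δ`. -/
theorem stmt_2 (p m k s : ℕ) [Fact p.Prime] (hp : Odd p) (hp3 : p ≠ 3)
    (hm : 0 < m) (hk : 0 < k)
    (Θ : Rk p m k ≃+* Rk p m k) (hΘ : orderOf Θ ∣ p ^ s)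
    (lam0 : Rk p m k) (hlam0 : IsUnit lam0) (hfix : Θ lam0 = lam0)
    (δ : Rk p m k) (hδ : IsUnit δ) (hcube : lam0 = δ ^ 3) :
    Θ δ = δ := by
  have hpp : p.Prime := Fact.out
  obtain ⟨d, rfl⟩ := hδ
  set φ := resid p m k hk with hφdef
  set ε : Rk p m k := Θ ↑d * ↑d⁻¹ with hεdef
  have hmul : Θ (↑d : Rk p m k) = ε * ↑d := by
    rw [hεdef, mul_assoc, Units.inv_mul, mul_one]
  have hε3 : ε ^ 3 = 1 := by
    have h1 : (Θ ↑d) ^ 3 = ((d : Rk p m k)) ^ 3 := by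
      rw [← map_pow, ← hcube, hfix, hcube]
    have h2 : ε ^ 3 = (Θ ↑d) ^ 3 * ((↑d⁻¹ : Rk p m k)) ^ 3 := mul_pow _ _ 3
    rw [h2, h1, ← mul_pow, Units.mul_inv, one_pow]
  by_cases hε1 : ε = 1
  · rw [hmul, hε1, one_mul]
  exfalso
  -- basic facts
  have hεΘ3 : (Θ ε) ^ 3 = 1 := by rw [← map_pow, hε3, map_one]
  have hB : ∀ x y : Rk p m k, x ^ 3 = 1 → y ^ 3 = 1 → φ x = φ y → x = y :=
    fun x y hx hy hr => cube_root_eq_of_resid_eq p m k hp3 hk hx hy hr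
  have hφε3 : (φ ε) ^ 3 = 1 := by rw [← map_pow, hε3, map_one]
  have hφΘ3 : (φ (Θ ε)) ^ 3 = 1 := by rw [← map_pow, hεΘ3, map_one]
  have hφε1 : φ ε ≠ 1 := by
    intro h
    exact hε1 (hB ε 1 hε3 (one_pow 3) (by rw [h, map_one]))
  -- order facts
  set n := orderOf Θ with hndef
  have hpn0 : p ^ s ≠ 0 := pow_ne_zero s hpp.ne_zero
  have hn0 : n ≠ 0 := by
    intro h
    rw [h] at hΘ
    exact hpn0 (zero_dvd_iff.1 hΘ)
  have h3n : ¬ (3 ∣ n) := by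
    intro h
    have h3ps : 3 ∣ p ^ s := h.trans hΘ
    have : (3 : ℕ) ∣ p := Nat.Prime.dvd_of_dvd_pow (by norm_num) h3ps
    exact hp3 ((Nat.prime_dvd_prime_iff_eq (by norm_num) hpp).1 this).symm
  have hodd : Odd n := by
    rcases Nat.even_or_odd n with he | ho
    · exfalso
      have : 2 ∣ p ^ s := (even_iff_two_dvd.1 he).trans hΘ
      have : (2 : ℕ) ∣ p := Nat.Prime.dvd_of_dvd_pow (by norm_num) this
      have := ((Nat.prime_dvd_prime_iff_eq (by norm_num) hpp).1 this).symm
      rw [this] at hp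
      simp [Nat.odd_iff] at hp
    · exact ho
  rcases field_cube_roots hφε3 hφε1 hφΘ3 with h | h | h
  · -- φ (Θ ε) = 1, so Θ ε = 1, so ε = 1, contradiction
    have hΘε1 : Θ ε = 1 := hB _ 1 hεΘ3 (one_pow 3) (by rw [h, map_one])
    exact hε1 (Θ.injective (by rw [hΘε1, map_one]))
  · -- Θ ε = ε
    have hfixε : Θ ε = ε := hB _ _ hεΘ3 hε3 (by rw [h])
    have hiter : ∀ j : ℕ, (Θ ^ j) (↑d : Rk p m k) = ε ^ j * ↑d := by
      intro j
      induction j with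
      | zero =>
        rw [pow_zero, pow_zero, one_mul]
        rfl
      | succ j ih =>
        have h1 : (Θ ^ (j + 1)) (↑d : Rk p m k) = Θ ((Θ ^ j) ↑d) := by
          rw [pow_succ']; rfl
        rw [h1, ih, map_mul, map_pow, hfixε, hmul, pow_succ]
        ring
    have hΘn : (Θ ^ n) (↑d : Rk p m k) = ↑d := by
      rw [pow_orderOf_eq_one]; rfl
    have hεn : ε ^ n = 1 := by
      have h2 : ε ^ n * ↑d = (1 : Rk p m k) * ↑d := by
        rw [← hiter n, hΘn, one_mul]
      calc ε ^ n = ε ^ n * (↑d * ↑d⁻¹ : Rk p m k) := by rw [Units.mul_inv, mul_one]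
        _ = (ε ^ n * ↑d) * ↑d⁻¹ := by ring
        _ = (1 * ↑d) * ↑d⁻¹ := by rw [h2]
        _ = 1 := by rw [one_mul, Units.mul_inv]
    have hd3 : orderOf ε ∣ 3 := orderOf_dvd_of_pow_eq_one hε3
    have hdn : orderOf ε ∣ n := orderOf_dvd_of_pow_eq_one hεn
    have hcop : Nat.Coprime 3 n := (Nat.Prime.coprime_iff_not_dvd (by norm_num)).2 h3n
    have : orderOf ε ∣ 1 := hcop ▸ Nat.dvd_gcd hd3 hdn
    exact hε1 (orderOf_eq_one_iff.1 (Nat.eq_one_of_dvd_one this))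
  · -- Θ ε = ε², contradiction with odd order
    have hε23 : (ε ^ 2) ^ 3 = 1 := by
      have : (ε ^ 2) ^ 3 = (ε ^ 3) ^ 2 := by ring
      rw [this, hε3, one_pow]
    have hΘε : Θ ε = ε ^ 2 := hB _ _ hεΘ3 hε23 (by rw [h, map_pow])
    have hΘε2 : Θ (ε ^ 2) = ε := by
      rw [map_pow, hΘε]
      calc (ε ^ 2) ^ 2 = ε ^ 3 * ε := by ring
        _ = ε := by rw [hε3, one_mul]
    have hiter2 : ∀ j : ℕ, (Θ ^ (2 * j + 1)) ε = ε ^ 2 := by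
      intro j
      induction j with
      | zero => simpa using hΘε
      | succ j ih =>
        have e : 2 * (j + 1) + 1 = (2 * j + 1) + 1 + 1 := by ring
        rw [e, pow_succ, pow_succ]
        show (Θ ^ (2 * j + 1)) (Θ (Θ ε)) = ε ^ 2
        rw [hΘε, hΘε2, ih]
    obtain ⟨j, hj⟩ := hodd
    have hΘnε : (Θ ^ n) ε = ε := by rw [pow_orderOf_eq_one]; rfl
    have heq : ε = ε ^ 2 := by
      have h5 := hiter2 j
      rw [← hj] at h5
      rw [← h5, hΘnε]
    have h2 : ε ^ 2 = 1 := by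
      calc ε ^ 2 = ε * ε := sq ε
        _ = ε ^ 2 * ε := by rw [← heq]
        _ = ε ^ 3 := by ring
        _ = 1 := hε3
    exact hε1 (heq.trans h2)
end

section
/- Let p be an odd prime, m, n, s, k ∈ ℕ, α ∈ 𝔽_{p^m}^*, and λ = α^n regarded as a unit of R_k. Then there exists α₀′ ∈ 𝔽_{p^m}^* with (α₀′)^{p^s} = α^{−1}, and for any such α₀′ the substitution x ↦ α₀′x induces a ring isomorphism Ψ : R_k[x]/⟨x^{np^s} − 1⟩ → R_k[x]/⟨x^{np^s} − λ⟩. Moreover Ψ is weight-preserving: it sends the class of ∑_{i<np^s} a_i x^i (a_i ∈ R_k) to the class of ∑_{i<np^s} a_i (α₀′)^i x^i, which has exactly the same number of nonzero coefficients. -/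
open Polynomial

/-- Let `α ∈ 𝔽_{p^m}^*` and `λ = αⁿ`, regarded as a unit of `R_k`.  There exists
`α₀' ∈ 𝔽_{p^m}^*` with `α₀'^{p^s} = α⁻¹`, and for any such `α₀'` the substitution
`x ↦ α₀'x` induces a ring isomorphism
`Ψ : R_k[x]/⟨x^{np^s} − 1⟩ → R_k[x]/⟨x^{np^s} − λ⟩`, sending the class of
`∑ aᵢ xⁱ` to the class of `∑ aᵢ (α₀')ⁱ xⁱ`, which has exactly the same number of
nonzero coefficients. -/
theorem stmt_4 (p m n s k : ℕ) [Fact p.Prime] (hp : Odd p)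
    (hm : 0 < m) (hn : 0 < n) (hk : 0 < k)
    (α : GaloisField p m) (hα : α ≠ 0) :
    (∃ α₀' : GaloisField p m, α₀' ≠ 0 ∧ α₀' ^ p ^ s = α⁻¹) ∧
    ∀ α₀' : GaloisField p m, α₀' ≠ 0 → α₀' ^ p ^ s = α⁻¹ →
      ∃ Ψ : ((Rk p m k)[X] ⧸ Ideal.span {(X : (Rk p m k)[X]) ^ (n * p ^ s) - 1}) ≃+*
            ((Rk p m k)[X] ⧸ Ideal.span
              {(X : (Rk p m k)[X]) ^ (n * p ^ s) - C (ofFq p m k α ^ n)}),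
        ∀ a : Fin (n * p ^ s) → Rk p m k,
          Ψ (Ideal.Quotient.mk _ (∑ i : Fin (n * p ^ s), C (a i) * X ^ (i : ℕ))) =
            Ideal.Quotient.mk _
              (∑ i : Fin (n * p ^ s),
                C (a i * ofFq p m k α₀' ^ (i : ℕ)) * X ^ (i : ℕ)) ∧
          Set.ncard {i : Fin (n * p ^ s) | a i * ofFq p m k α₀' ^ (i : ℕ) ≠ 0} =
            Set.ncard {i : Fin (n * p ^ s) | a i ≠ 0} := by
  constructor
  · obtain ⟨β, hβ⟩ := (iterateFrobeniusEquiv (GaloisField p m) p s).surjective α⁻¹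
    rw [iterateFrobeniusEquiv_apply, iterateFrobenius_def] at hβ
    refine ⟨β, ?_, hβ⟩
    rintro rfl
    rw [zero_pow (pow_ne_zero _ (Fact.out : p.Prime).ne_zero)] at hβ
    exact hα (inv_eq_zero.mp hβ.symm)
  · intro α₀' h0 hpow
    set N := n * p ^ s with hN
    set c : Rk p m k := ofFq p m k α₀' with hc
    set d : Rk p m k := ofFq p m k α₀'⁻¹ with hd
    have hcd : c * d = 1 := by
      rw [hc, hd, ← map_mul, mul_inv_cancel₀ h0, map_one]
    have hdc : d * c = 1 := by rw [mul_comm]; exact hcd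
    -- c^N * λ = 1
    have hcN : c ^ N * ofFq p m k α ^ n = 1 := by
      rw [hc, ← map_pow, ← map_pow, ← map_mul, hN, mul_comm n (p^s), pow_mul,
        hpow, ← mul_pow, inv_mul_cancel₀ hα, one_pow, map_one]
    set F : (Rk p m k)[X] →+* (Rk p m k)[X] := eval₂RingHom C (C c * X) with hF
    set G : (Rk p m k)[X] →+* (Rk p m k)[X] := eval₂RingHom C (C d * X) with hG
    have hFC : ∀ r, F (C r) = C r := fun r => eval₂_C _ _
    have hGC : ∀ r, G (C r) = C r := fun r => eval₂_C _ _
    have hFX : F X = C c * X := eval₂_X _ _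
    have hGX : G X = C d * X := eval₂_X _ _
    have hGF : G.comp F = RingHom.id _ := by
      apply Polynomial.ringHom_ext
      · intro a; simp [hFC, hGC]
      · simp only [RingHom.comp_apply, hFX, map_mul, hGC, hGX, RingHom.id_apply]
        rw [← mul_assoc, ← C_mul, mul_comm c d, hdc, C_1, one_mul]
    have hFG : F.comp G = RingHom.id _ := by
      apply Polynomial.ringHom_ext
      · intro a; simp [hFC, hGC]
      · simp only [RingHom.comp_apply, hGX, map_mul, hFC, hFX, RingHom.id_apply]
        rw [← mul_assoc, ← C_mul, hdc, C_1, one_mul]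
    set e : (Rk p m k)[X] ≃+* (Rk p m k)[X] := RingEquiv.ofRingHom F G
      (RingHom.ext fun q => RingHom.congr_fun hFG q)
      (RingHom.ext fun q => RingHom.congr_fun hGF q) with he
    have heF : ∀ q, e q = F q := fun q => rfl
    -- key computation
    have hFgen : F (X ^ N - 1) = C (c ^ N) * (X ^ N - C (ofFq p m k α ^ n)) := by
      rw [map_sub, map_one, map_pow, hFX, mul_pow, ← C_pow, mul_sub, ← C_mul, hcN, C_1]
    have hmap : Ideal.span {(X : (Rk p m k)[X]) ^ N - C (ofFq p m k α ^ n)} =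
        (Ideal.span {(X : (Rk p m k)[X]) ^ N - 1}).map (e : (Rk p m k)[X] →+* (Rk p m k)[X]) := by
      rw [Ideal.map_span, Set.image_singleton]
      have : (e : (Rk p m k)[X] →+* (Rk p m k)[X]) (X ^ N - 1) =
          C (c ^ N) * (X ^ N - C (ofFq p m k α ^ n)) := hFgen
      rw [this]
      apply le_antisymm
      · rw [Ideal.span_singleton_le_span_singleton]
        refine ⟨C (ofFq p m k α ^ n), ?_⟩
        rw [mul_comm (C (c ^ N)) (X ^ N - C (ofFq p m k α ^ n)), mul_assoc,
          ← C_mul, hcN, C_1, mul_one]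
      · rw [Ideal.span_singleton_le_span_singleton]
        exact dvd_mul_left _ _
    refine ⟨Ideal.quotientEquiv _ _ e hmap, ?_⟩
    intro a
    constructor
    · rw [Ideal.quotientEquiv_mk]
      congr 1
      rw [heF, map_sum]
      refine Finset.sum_congr rfl fun i _ => ?_
      rw [map_mul, map_pow, hFC, hFX, mul_pow, ← C_pow, C_mul, mul_assoc]
    · congr 1
      ext i
      simp only [Set.mem_setOf_eq]
      have hu : c ^ (i : ℕ) * d ^ (i : ℕ) = 1 := by rw [← mul_pow, hcd, one_pow]
      constructor
      · intro h hz; exact h (by rw [hz, zero_mul])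
      · intro h hz
        apply h
        have := congrArg (· * d ^ (i : ℕ)) hz
        simpa [mul_assoc, hu] using this
end

section
/- Let p be a prime with p ≡ 1 (mod 3), let m, s, k ∈ ℕ, let δ ∈ R_k^*, and set λ = δ^{3p^s}. Let ω ∈ 𝔽_p^* be a primitive cube root of unity (which exists since 3 divides p − 1). Then x^{3p^s} − λ = (x − δ)^{p^s}(x − ωδ)^{p^s}(x − ω²δ)^{p^s} in R_k[x], and there is a ring isomorphism R_k[x]/⟨x^{3p^s} − λ⟩ ≅ R_k[x]/⟨(x − δ)^{p^s}⟩ × R_k[x]/⟨(x − ωδ)^{p^s}⟩ × R_k[x]/⟨(x − ω²δ)^{p^s}⟩. -/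
open Polynomial

set_option maxHeartbeats 1000000

/-- `iZp p m k` is the canonical embedding `𝔽_p → 𝔽_{p^m}[u]/⟨u^k⟩`. -/
noncomputable abbrev iZp (p m k : ℕ) [Fact p.Prime] : ZMod p →+* Rk p m k :=
  (ofFq p m k).comp (algebraMap (ZMod p) (GaloisField p m))

/-- If `b - a` is a unit, `X - C a` and `X - C b` are coprime. -/
lemma aux_coprime_X_sub_C {R : Type*} [CommRing R] {a b : R} (h : IsUnit (b - a)) :
    IsCoprime (X - C a : R[X]) (X - C b) := by
  obtain ⟨v, hv⟩ := isUnit_iff_exists_inv.mp h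
  refine ⟨C v, -C v, ?_⟩
  calc C v * (X - C a) + -C v * (X - C b) = C v * (C b - C a) := by ring
    _ = C (v * (b - a)) := by rw [← C_sub, ← C_mul]
    _ = 1 := by rw [mul_comm, hv, C_1]


lemma aux_crt {R : Type*} [CommRing R] (a b c : R) (hab : IsCoprime a b)
    (hac : IsCoprime a c) (hbc : IsCoprime b c) :
    Nonempty ((R ⧸ Ideal.span {a * (b * c)}) ≃+*
      (R ⧸ Ideal.span {a}) × (R ⧸ Ideal.span {b}) × (R ⧸ Ideal.span {c})) := by
  rw [← Ideal.span_singleton_mul_span_singleton,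
    ← Ideal.span_singleton_mul_span_singleton]
  refine ⟨(Ideal.quotientMulEquivQuotientProd _ _ ?_).trans
    (RingEquiv.prodCongr (RingEquiv.refl _)
      (Ideal.quotientMulEquivQuotientProd _ _
        ((Ideal.isCoprime_span_singleton_iff _ _).mpr hbc)))⟩
  rw [Ideal.span_singleton_mul_span_singleton]
  exact (Ideal.isCoprime_span_singleton_iff _ _).mpr (hab.mul_right hac)

/-- Let `p ≡ 1 (mod 3)`, `δ ∈ R_k^*` and `λ = δ^{3p^s}`.  A primitive cube root of
unity `ω` exists in `𝔽_p^*`, and for any such `ω`,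
`x^{3p^s} − λ = (x − δ)^{p^s}(x − ωδ)^{p^s}(x − ω²δ)^{p^s}` in `R_k[x]`, and
`R_k[x]/⟨x^{3p^s} − λ⟩ ≅ R_k[x]/⟨(x − δ)^{p^s}⟩ × R_k[x]/⟨(x − ωδ)^{p^s}⟩ ×
R_k[x]/⟨(x − ω²δ)^{p^s}⟩`. -/
theorem stmt_8 (p m s k : ℕ) [Fact p.Prime] (hp : p % 3 = 1)
    (hm : 0 < m) (hk : 0 < k) (δ : Rk p m k) (hδ : IsUnit δ) :
    (∃ ω : ZMod p, ω ≠ 1 ∧ ω ^ 3 = 1) ∧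
    ∀ ω : ZMod p, ω ≠ 1 → ω ^ 3 = 1 →
      (X ^ (3 * p ^ s) - C (δ ^ (3 * p ^ s)) : (Rk p m k)[X]) =
        (X - C δ) ^ p ^ s * (X - C (iZp p m k ω * δ)) ^ p ^ s *
          (X - C (iZp p m k ω ^ 2 * δ)) ^ p ^ s ∧
      Nonempty
        (((Rk p m k)[X] ⧸
            Ideal.span
              {(X : (Rk p m k)[X]) ^ (3 * p ^ s) - C (δ ^ (3 * p ^ s))}) ≃+*
          ((Rk p m k)[X] ⧸ Ideal.span {((X : (Rk p m k)[X]) - C δ) ^ p ^ s}) ×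
          ((Rk p m k)[X] ⧸
            Ideal.span {((X : (Rk p m k)[X]) - C (iZp p m k ω * δ)) ^ p ^ s}) ×
          ((Rk p m k)[X] ⧸
            Ideal.span
              {((X : (Rk p m k)[X]) - C (iZp p m k ω ^ 2 * δ)) ^ p ^ s})) := by
  have hprime := Fact.out (p := p.Prime)
  -- existence of ω
  have h3 : (3 : ℕ) ∣ Fintype.card (ZMod p)ˣ := by
    rw [ZMod.card_units p]
    have := hprime.two_le
    omega
  have hωex : ∃ ω : ZMod p, ω ≠ 1 ∧ ω ^ 3 = 1 := by
    have : Fact (Nat.Prime 3) := ⟨by norm_num⟩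
    obtain ⟨x, hx⟩ := exists_prime_orderOf_dvd_card 3 h3
    refine ⟨(x : ZMod p), ?_, ?_⟩
    · intro h
      have hx1 : x = 1 := Units.ext h
      rw [hx1, orderOf_one] at hx; norm_num at hx
    · have h1 : x ^ 3 = 1 := by rw [← hx]; exact pow_orderOf_eq_one x
      simpa using congrArg Units.val h1
  refine ⟨hωex, ?_⟩
  intro ω hω1 hω3
  -- basic facts
  haveI hnt : Nontrivial (Rk p m k) := by
    refine AdjoinRoot.nontrivial _ ?_
    rw [degree_X_pow]
    exact_mod_cast hk.ne'
  haveI hchar : CharP (Rk p m k) p :=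
    charP_of_injective_ringHom (ofFq p m k).injective p
  -- ω facts
  have hω0 : ω ≠ 0 := by rintro rfl; simp at hω3
  have hω2ne : ω ^ 2 ≠ 1 := by
    intro h
    apply hω1
    have h2 : ω ^ 3 = ω * ω ^ 2 := by ring
    rw [hω3, h, mul_one] at h2; exact h2.symm
  have hsum : 1 + ω + ω ^ 2 = 0 := by
    have h1 : (ω - 1) * (1 + ω + ω ^ 2) = ω ^ 3 - 1 := by ring
    rw [hω3, sub_self] at h1
    exact (mul_eq_zero.mp h1).resolve_left (sub_ne_zero.mpr hω1)
  set f := iZp p m k with hf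
  set W := f ω with hW
  have hW3 : W ^ 3 = 1 := by rw [hW, ← map_pow, hω3, map_one]
  have hWsum : (1 : Rk p m k) + W + W ^ 2 = 0 := by
    have := congrArg f hsum
    simpa using this
  -- units needed for coprimality
  have u1 : IsUnit (W * δ - δ) := by
    have h : IsUnit (ω - 1) := isUnit_iff_ne_zero.mpr (sub_ne_zero.mpr hω1)
    have : W * δ - δ = f (ω - 1) * δ := by rw [map_sub, map_one]; ring
    rw [this]; exact (h.map f).mul hδ
  have u2 : IsUnit (W ^ 2 * δ - δ) := by
    have h : IsUnit (ω ^ 2 - 1) := isUnit_iff_ne_zero.mpr (sub_ne_zero.mpr hω2ne)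
    have : W ^ 2 * δ - δ = f (ω ^ 2 - 1) * δ := by
      rw [map_sub, map_one, map_pow]; ring
    rw [this]; exact (h.map f).mul hδ
  have u3 : IsUnit (W ^ 2 * δ - W * δ) := by
    have h : IsUnit (ω ^ 2 - ω) := by
      refine isUnit_iff_ne_zero.mpr ?_
      intro h0
      have : ω * (ω - 1) = 0 := by rw [← h0]; ring
      rcases mul_eq_zero.mp this with h' | h'
      · exact hω0 h'
      · exact hω1 (sub_eq_zero.mp h')
    have : W ^ 2 * δ - W * δ = f (ω ^ 2 - ω) * δ := by
      rw [map_sub, map_pow]; ring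
    rw [this]; exact (h.map f).mul hδ
  -- factorization of degree-3 polynomial
  have hfac3 : (X - C δ) * (X - C (W * δ)) * (X - C (W ^ 2 * δ)) =
      (X ^ 3 - C (δ ^ 3) : (Rk p m k)[X]) := by
    have h1 : (C W : (Rk p m k)[X]) ^ 3 = 1 := by rw [← C_pow, hW3, C_1]
    have h2 : (1 : (Rk p m k)[X]) + C W + C W ^ 2 = 0 := by
      rw [← C_1, ← C_pow, ← C_add, ← C_add, hWsum, C_0]
    simp only [C_mul, C_pow]
    linear_combination (-(C δ * X ^ 2) + C W * C δ ^ 2 * X) * h2 - C δ ^ 3 * h1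
  -- main factorization
  have hEq : (X ^ (3 * p ^ s) - C (δ ^ (3 * p ^ s)) : (Rk p m k)[X]) =
      (X - C δ) ^ p ^ s * (X - C (W * δ)) ^ p ^ s * (X - C (W ^ 2 * δ)) ^ p ^ s := by
    have : (X ^ (3 * p ^ s) - C (δ ^ (3 * p ^ s)) : (Rk p m k)[X]) =
        ((X ^ 3 - C (δ ^ 3)) : (Rk p m k)[X]) ^ p ^ s := by
      rw [sub_pow_char_pow, ← pow_mul, ← C_pow, ← pow_mul]
    rw [this, ← hfac3, mul_pow, mul_pow]
  refine ⟨hEq, ?_⟩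
  -- CRT
  have cab : IsCoprime ((X - C δ) ^ p ^ s : (Rk p m k)[X]) ((X - C (W * δ)) ^ p ^ s) :=
    (aux_coprime_X_sub_C u1).pow
  have cac : IsCoprime ((X - C δ) ^ p ^ s : (Rk p m k)[X]) ((X - C (W ^ 2 * δ)) ^ p ^ s) :=
    (aux_coprime_X_sub_C u2).pow
  have cbc : IsCoprime ((X - C (W * δ)) ^ p ^ s : (Rk p m k)[X])
      ((X - C (W ^ 2 * δ)) ^ p ^ s) :=
    (aux_coprime_X_sub_C u3).pow
  rw [hEq, mul_assoc]
  exact aux_crt _ _ _ cab cac cbc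
end

section
/- Let p be a prime with p ≡ 2 (mod 3), let m be odd, let k ∈ ℕ, and let δ ∈ R_k^* be a unit. Then the polynomial x² + δx + δ² has no root in R_k; that is, r² + δr + δ² ≠ 0 for every r ∈ R_k. -/
open Polynomial

/-- Let `p ≡ 2 (mod 3)`, `m` odd, and `δ ∈ R_k^*` a unit.  Then `x² + δx + δ²`
has no root in `R_k`: `r² + δr + δ² ≠ 0` for every `r ∈ R_k`. -/
theorem stmt_9 (p m k : ℕ) [Fact p.Prime] (hp : p % 3 = 2) (hm : Odd m)
    (hk : 0 < k) (δ : Rk p m k) (hδ : IsUnit δ) :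
    ∀ r : Rk p m k, r ^ 2 + δ * r + δ ^ 2 ≠ 0 := by
  intro r hr
  set F := GaloisField p m
  -- the residue map sending the root `u` to `0`
  have hroot : (Polynomial.aeval (0 : F)) (X ^ k : F[X]) = 0 := by
    simp [zero_pow hk.ne']
  let φ : Rk p m k →+* F := AdjoinRoot.lift (f := (X ^ k : F[X])) (RingHom.id F) 0 (by simp [zero_pow hk.ne'])
  have hb : φ δ ≠ 0 := (hδ.map φ).ne_zero
  have h0 : (φ r) ^ 2 + φ δ * φ r + (φ δ) ^ 2 = 0 := by
    have := congrArg φ hr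
    simpa [map_add, map_mul, map_pow] using this
  set a := φ r with ha
  set b := φ δ with hbdef
  set t := a / b with htdef
  have ht : t ^ 2 + t + 1 = 0 := by
    have hb2 : b ^ 2 ≠ 0 := pow_ne_zero _ hb
    have htb : t * b = a := by rw [htdef]; exact div_mul_cancel₀ a hb
    have h2 : b ^ 2 * (t ^ 2 + t + 1) = 0 := by rw [← h0, ← htb]; ring
    exact (mul_eq_zero.mp h2).resolve_left hb2
  -- `p ≠ 3`
  have hp3 : p ≠ 3 := by intro h; rw [h] at hp; simp at hp
  have ht1 : t ≠ 1 := by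
    intro h
    rw [h] at ht
    have h3 : (3 : F) = 0 := by linear_combination ht
    have := (CharP.cast_eq_zero_iff F p 3).mp (by exact_mod_cast h3)
    have := (Nat.prime_dvd_prime_iff_eq (Fact.out) (by norm_num)).mp this
    exact hp3 this
  have ht3 : t ^ 3 = 1 := by linear_combination (t - 1) * ht
  haveI : Fact (Nat.Prime 3) := ⟨by norm_num⟩
  have hord : orderOf t = 3 := orderOf_eq_prime ht3 ht1
  haveI : Fintype F := Fintype.ofFinite F
  have htne : t ≠ 0 := by
    intro h; rw [h] at ht; simp at ht
  have hpow : t ^ (Fintype.card F - 1) = 1 := FiniteField.pow_card_sub_one_eq_one t htne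
  have hdvd : (3 : ℕ) ∣ Fintype.card F - 1 := hord ▸ orderOf_dvd_of_pow_eq_one hpow
  have hm0 : m ≠ 0 := by rintro rfl; simp at hm
  rw [← Nat.card_eq_fintype_card, GaloisField.card p m hm0] at hdvd
  -- number theory: `p^m ≡ 2 (mod 3)` since `p ≡ 2` and `m` odd
  obtain ⟨j, rfl⟩ := hm
  have h4 : (4 : ℕ) ^ j % 3 = 1 := by
    rw [Nat.pow_mod]; simp
  have hmod : p ^ (2 * j + 1) % 3 = 2 := by
    rw [Nat.pow_mod, hp]
    have : (2 : ℕ) ^ (2 * j + 1) = 4 ^ j * 2 := by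
      rw [pow_succ, pow_mul]; norm_num
    rw [this, Nat.mul_mod, h4]
  have hpos : 1 ≤ p ^ (2 * j + 1) := Nat.one_le_pow _ _ (Fact.out : p.Prime).pos
  omega
end

section
/- Let p be a prime with p ≡ 2 (mod 3), let m be odd, let s, k ∈ ℕ, let δ ∈ R_k^*, and set λ = δ^{3p^s}. Then x^{3p^s} − λ = (x − δ)^{p^s}(x² + δx + δ²)^{p^s} in R_k[x], and there is a ring isomorphism R_k[x]/⟨x^{3p^s} − λ⟩ ≅ R_k[x]/⟨(x − δ)^{p^s}⟩ × R_k[x]/⟨(x² + δx + δ²)^{p^s}⟩. -/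
open Polynomial

theorem Rk_charP (p m k : ℕ) [Fact p.Prime] (hk : 0 < k) : CharP (Rk p m k) p := by
  have hdeg : (X ^ k : (GaloisField p m)[X]).degree ≠ 0 := by
    rw [degree_X_pow]; exact_mod_cast hk.ne'
  haveI := AdjoinRoot.nontrivial _ hdeg
  exact charP_of_injective_algebraMap' (A := Rk p m k) (GaloisField p m) p

/-- Let `p ≡ 2 (mod 3)`, `m` odd, `δ ∈ R_k^*` and `λ = δ^{3p^s}`.  Then
`x^{3p^s} − λ = (x − δ)^{p^s}(x² + δx + δ²)^{p^s}` in `R_k[x]`, and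
`R_k[x]/⟨x^{3p^s} − λ⟩ ≅ R_k[x]/⟨(x − δ)^{p^s}⟩ × R_k[x]/⟨(x² + δx + δ²)^{p^s}⟩`. -/
theorem stmt_10 (p m s k : ℕ) [Fact p.Prime] (hp : p % 3 = 2) (hm : Odd m)
    (hk : 0 < k) (δ : Rk p m k) (hδ : IsUnit δ) :
    (X ^ (3 * p ^ s) - C (δ ^ (3 * p ^ s)) : (Rk p m k)[X]) =
      (X - C δ) ^ p ^ s * (X ^ 2 + C δ * X + C (δ ^ 2)) ^ p ^ s ∧
    Nonempty
      (((Rk p m k)[X] ⧸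
          Ideal.span
            {(X : (Rk p m k)[X]) ^ (3 * p ^ s) - C (δ ^ (3 * p ^ s))}) ≃+*
        ((Rk p m k)[X] ⧸ Ideal.span {((X : (Rk p m k)[X]) - C δ) ^ p ^ s}) ×
        ((Rk p m k)[X] ⧸
          Ideal.span
            {((X : (Rk p m k)[X]) ^ 2 + C δ * X + C (δ ^ 2)) ^ p ^ s})) := by
  have hcharR : CharP (Rk p m k) p := Rk_charP p m k hk
  haveI := hcharR
  set a : (Rk p m k)[X] := X - C δ with ha
  set b : (Rk p m k)[X] := X ^ 2 + C δ * X + C (δ ^ 2) with hb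
  have hfac : (X ^ (3 * p ^ s) - C (δ ^ (3 * p ^ s)) : (Rk p m k)[X]) =
      a ^ p ^ s * b ^ p ^ s := by
    have h3 : (X ^ 3 - C (δ ^ 3) : (Rk p m k)[X]) = a * b := by
      rw [ha, hb, map_pow, map_pow]; ring
    calc (X ^ (3 * p ^ s) - C (δ ^ (3 * p ^ s)) : (Rk p m k)[X])
        = (X ^ 3) ^ p ^ s - (C (δ ^ 3)) ^ p ^ s := by
          rw [← pow_mul, ← map_pow, ← pow_mul]
      _ = (X ^ 3 - C (δ ^ 3)) ^ p ^ s := (sub_pow_char_pow _ _ _).symm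
      _ = a ^ p ^ s * b ^ p ^ s := by rw [h3, mul_pow]
  refine ⟨hfac, ?_⟩
  -- coprimality of a and b
  have hp3 : p ≠ 3 := by omega
  have h3u : IsUnit (3 * δ ^ 2 : Rk p m k) := by
    refine (IsUnit.mul ?_ (hδ.pow 2))
    have : IsUnit (3 : GaloisField p m) := by
      have : (3 : GaloisField p m) ≠ 0 := by
        intro h
        have h3 : ((3 : ℕ) : GaloisField p m) = 0 := by exact_mod_cast h
        have hdvd : p ∣ 3 := (CharP.cast_eq_zero_iff (GaloisField p m) p 3).mp h3
        have := (Nat.prime_dvd_prime_iff_eq Fact.out (by norm_num)).mp hdvd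
        omega
      exact this.isUnit
    have := this.map (algebraMap (GaloisField p m) (Rk p m k))
    rwa [map_ofNat] at this
  obtain ⟨t, ht⟩ := h3u.exists_left_inv
  have hcop : IsCoprime a b := by
    refine ⟨-(C t) * (X + 2 * C δ), C t, ?_⟩
    have : (-(C t) * (X + 2 * C δ)) * a + C t * b = C t * C (3 * δ ^ 2) := by
      rw [ha, hb]
      have h1 : (C (3 * δ ^ 2) : (Rk p m k)[X]) = 3 * (C δ) ^ 2 := by
        rw [map_mul, map_pow, map_ofNat]
      rw [h1, map_pow]
      ring
    rw [this, ← map_mul, ht, map_one]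
  have hcops : IsCoprime (a ^ p ^ s) (b ^ p ^ s) := hcop.pow
  -- CRT
  have hIJ : IsCoprime (Ideal.span {a ^ p ^ s}) (Ideal.span {b ^ p ^ s}) :=
    (Ideal.isCoprime_span_singleton_iff _ _).mpr hcops
  have hspan : Ideal.span {(X ^ (3 * p ^ s) - C (δ ^ (3 * p ^ s)) : (Rk p m k)[X])} =
      Ideal.span {a ^ p ^ s} * Ideal.span {b ^ p ^ s} := by
    rw [Ideal.span_singleton_mul_span_singleton, hfac]
  exact ⟨(Ideal.quotEquivOfEq hspan).trans (Ideal.quotientMulEquivQuotientProd _ _ hIJ)⟩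
end

section
/- Let p be an odd prime with p^m ≡ 1 (mod 6) and let s, k ∈ ℕ. Then 𝔽_{p^m} contains an element α of multiplicative order 6; one has x^{6p^s} − 1 = ∏_{i=1}^{6}(x − α^i)^{p^s} in R_k[x], where (x − α^i)^{p^s} = x^{p^s} − α^{i p^s}; and there is a ring isomorphism R_k[x]/⟨x^{6p^s} − 1⟩ ≅ ∏_{i=1}^{6} R_k[x]/⟨x^{p^s} − α^{i p^s}⟩. -/
open Polynomial

/-- Let `p` be an odd prime with `p^m ≡ 1 (mod 6)`.  Then `𝔽_{p^m}` contains an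
element `α` of multiplicative order `6`; one has
`x^{6p^s} − 1 = ∏_{i=1}^{6}(x − αⁱ)^{p^s}` in `R_k[x]`, where
`(x − αⁱ)^{p^s} = x^{p^s} − α^{i p^s}`; and
`R_k[x]/⟨x^{6p^s} − 1⟩ ≅ ∏_{i=1}^{6} R_k[x]/⟨x^{p^s} − α^{i p^s}⟩`. -/
theorem stmt_11 (p m s k : ℕ) [Fact p.Prime] (hp : Odd p) (hm : 0 < m)
    (hk : 0 < k) (hpm : p ^ m % 6 = 1) :
    ∃ α : GaloisField p m, orderOf α = 6 ∧
      (X ^ (6 * p ^ s) - 1 : (Rk p m k)[X]) =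
        ∏ i ∈ Finset.Icc 1 6, (X - C (ofFq p m k (α ^ i))) ^ p ^ s ∧
      (∀ i ∈ Finset.Icc 1 6,
        ((X : (Rk p m k)[X]) - C (ofFq p m k (α ^ i))) ^ p ^ s =
          X ^ p ^ s - C (ofFq p m k (α ^ (i * p ^ s)))) ∧
      Nonempty
        (((Rk p m k)[X] ⧸
            Ideal.span {(X : (Rk p m k)[X]) ^ (6 * p ^ s) - 1}) ≃+*
          ((i : Fin 6) → (Rk p m k)[X] ⧸
            Ideal.span
              {(X : (Rk p m k)[X]) ^ p ^ s -
                C (ofFq p m k (α ^ (((i : ℕ) + 1) * p ^ s)))})) := by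
  classical
  set F := GaloisField p m
  have hple : 2 ≤ p := (Fact.out : p.Prime).two_le
  have hpm1 : 1 < p ^ m := Nat.one_lt_pow hm.ne' (by omega)
  have hpm7 : 7 ≤ p ^ m := by omega
  have hcardF : Nat.card F = p ^ m := GaloisField.card p m hm.ne'
  have hcardU : Nat.card Fˣ = p ^ m - 1 := by rw [Nat.card_units, hcardF]
  obtain ⟨g, hg⟩ := IsCyclic.exists_ofOrder_eq_natCard (α := Fˣ)
  rw [hcardU] at hg
  set t : ℕ := (p ^ m - 1) / 6 with ht
  have h6t : p ^ m - 1 = 6 * t := by omega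
  have htpos : 0 < t := by omega
  set ζ : Fˣ := g ^ t with hζ
  have hordζ : orderOf ζ = 6 := by
    rw [hζ, orderOf_pow, hg, h6t, Nat.gcd_eq_right (dvd_mul_left t 6),
      Nat.mul_div_cancel _ htpos]
  set α : F := (ζ : F) with hα
  have hordα : orderOf α = 6 := by rw [hα, orderOf_units, hordζ]
  -- distinctness of the powers α^i for i ∈ [1, 6]
  have hdist : ∀ a ∈ Finset.Icc 1 6, ∀ b ∈ Finset.Icc 1 6, a ≠ b →
      α ^ a ≠ α ^ b := by
    intro a ha b hb hab h
    have h' : ζ ^ a = ζ ^ b := Units.ext (by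
      simpa [hα, Units.val_pow_eq_pow_val] using h)
    rw [pow_eq_pow_iff_modEq, hordζ] at h'
    have h'' : a % 6 = b % 6 := h'
    simp only [Finset.mem_Icc] at ha hb
    omega
  have hprim : IsPrimitiveRoot α 6 := by
    have := IsPrimitiveRoot.orderOf α
    rwa [hordα] at this
  -- `X^6 - 1 = ∏_{i=1}^{6} (X - α^i)` in `F[X]`
  have hprodF : (X ^ 6 - 1 : F[X]) = ∏ i ∈ Finset.Icc 1 6, (X - C (α ^ i)) := by
    have himg : Polynomial.nthRootsFinset 6 (1 : F) =
        Finset.image (fun i => α ^ i) (Finset.Icc 1 6) := by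
      symm
      apply Finset.eq_of_subset_of_card_le
      · intro x hx
        simp only [Finset.mem_image] at hx
        obtain ⟨i, hi, rfl⟩ := hx
        rw [Polynomial.mem_nthRootsFinset (by norm_num)]
        rw [← pow_mul, mul_comm, pow_mul, ← hordα, pow_orderOf_eq_one, one_pow]
      · rw [hprim.card_nthRootsFinset, Finset.card_image_of_injOn
          (fun a ha b hb h => by by_contra hab; exact hdist a ha b hb hab h)]
        simp
    rw [X_pow_sub_one_eq_prod (by norm_num) hprim, himg,
      Finset.prod_image (fun a ha b hb h => by by_contra hab; exact hdist a ha b hb hab h)]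
  -- Frobenius identities in `F[X]`
  have hchar : CharP F[X] p := inferInstance
  have hfrobF : ∀ i : ℕ, ((X : F[X]) - C (α ^ i)) ^ p ^ s =
      X ^ p ^ s - C (α ^ (i * p ^ s)) := by
    intro i
    rw [sub_pow_char_pow, ← C_pow, ← pow_mul]
  have hkeyF : (X ^ (6 * p ^ s) - 1 : F[X]) =
      ∏ i ∈ Finset.Icc 1 6, (X - C (α ^ i)) ^ p ^ s := by
    rw [Finset.prod_pow, ← hprodF, sub_pow_char_pow, ← pow_mul, one_pow]
  -- push everything to `R_k[X]`
  set φ : F →+* Rk p m k := ofFq p m k with hφ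
  have hmain : (X ^ (6 * p ^ s) - 1 : (Rk p m k)[X]) =
      ∏ i ∈ Finset.Icc 1 6, (X - C (φ (α ^ i))) ^ p ^ s := by
    have := congrArg (Polynomial.map φ) hkeyF
    simpa [Polynomial.map_prod, Polynomial.map_pow, Polynomial.map_sub,
      Polynomial.map_one, Polynomial.map_X, Polynomial.map_C] using this
  have hfrob : ∀ i : ℕ, ((X : (Rk p m k)[X]) - C (φ (α ^ i))) ^ p ^ s =
      X ^ p ^ s - C (φ (α ^ (i * p ^ s))) := by
    intro i
    have := congrArg (Polynomial.map φ) (hfrobF i)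
    simpa [Polynomial.map_pow, Polynomial.map_sub, Polynomial.map_X,
      Polynomial.map_C] using this
  refine ⟨α, hordα, hmain, fun i _ => hfrob i, ?_⟩
  -- Chinese remainder theorem part
  set f : Fin 6 → (Rk p m k)[X] := fun i =>
    X ^ p ^ s - C (φ (α ^ (((i : ℕ) + 1) * p ^ s))) with hf
  have hf' : ∀ i : Fin 6, f i = ((X : (Rk p m k)[X]) - C (φ (α ^ ((i : ℕ) + 1)))) ^ p ^ s :=
    fun i => (hfrob _).symm
  have hcop : ∀ i j : Fin 6, i ≠ j → IsCoprime (f i) (f j) := by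
    intro i j hij
    rw [hf' i, hf' j]
    refine (IsCoprime.pow ?_)
    apply Polynomial.isCoprime_X_sub_C_of_isUnit_sub
    rw [← map_sub]
    apply IsUnit.map
    have hne : α ^ ((i : ℕ) + 1) ≠ α ^ ((j : ℕ) + 1) := by
      apply hdist
      · simp [Finset.mem_Icc]
      · simp [Finset.mem_Icc]
      · simpa [Fin.val_eq_val] using hij
    exact (sub_ne_zero_of_ne hne).isUnit
  have hspan : Ideal.span {(X : (Rk p m k)[X]) ^ (6 * p ^ s) - 1} =
      ⨅ i : Fin 6, Ideal.span {f i} := by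
    rw [Ideal.iInf_span_singleton hcop]
    congr 1
    rw [hmain]
    refine congrArg (fun x => ({x} : Set (Rk p m k)[X])) ?_
    -- ∏ over Icc 1 6 equals ∏ over Fin 6 shifted
    rw [show (Finset.Icc 1 6 : Finset ℕ) = Finset.Ico 1 7 from rfl,
      Finset.prod_Ico_eq_prod_range,
      Fin.prod_univ_eq_prod_range
        (fun j => (X : (Rk p m k)[X]) ^ p ^ s - C (φ (α ^ ((j + 1) * p ^ s)))) 6]
    refine Finset.prod_congr rfl fun j _ => ?_
    rw [add_comm 1 j, hfrob]
  have hpc : Pairwise (Function.onFun IsCoprime fun i : Fin 6 => Ideal.span {f i}) := by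
    intro i j hij
    exact (Ideal.isCoprime_span_singleton_iff _ _).mpr (hcop i j hij)
  exact ⟨(Ideal.quotEquivOfEq hspan).trans
    (Ideal.quotientInfRingEquivPiQuotient (fun i => Ideal.span {f i}) hpc)⟩
end

section
/- Let p be a prime with p ≡ 5 (mod 6), let m be odd, and let s, k ∈ ℕ. Then x^{6p^s} − 1 = (x−1)^{p^s}(x+1)^{p^s}(x²−x+1)^{p^s}(x²+x+1)^{p^s} in R_k[x], the polynomials x² − x + 1 and x² + x + 1 have no root in R_k, and there is a ring isomorphism R_k[x]/⟨x^{6p^s} − 1⟩ ≅ R_k[x]/⟨(x−1)^{p^s}⟩ × R_k[x]/⟨(x+1)^{p^s}⟩ × R_k[x]/⟨(x²−x+1)^{p^s}⟩ × R_k[x]/⟨(x²+x+1)^{p^s}⟩. -/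
open Polynomial

set_option maxHeartbeats 1000000

/-- Let `p ≡ 5 (mod 6)` and `m` odd.  Then
`x^{6p^s} − 1 = (x−1)^{p^s}(x+1)^{p^s}(x²−x+1)^{p^s}(x²+x+1)^{p^s}` in `R_k[x]`,
the polynomials `x² − x + 1` and `x² + x + 1` have no root in `R_k`, and
`R_k[x]/⟨x^{6p^s} − 1⟩ ≅ R_k[x]/⟨(x−1)^{p^s}⟩ × R_k[x]/⟨(x+1)^{p^s}⟩ ×
R_k[x]/⟨(x²−x+1)^{p^s}⟩ × R_k[x]/⟨(x²+x+1)^{p^s}⟩`. -/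
theorem stmt_12 (p m s k : ℕ) [Fact p.Prime] (hp : p % 6 = 5) (hm : Odd m)
    (hk : 0 < k) :
    (X ^ (6 * p ^ s) - 1 : (Rk p m k)[X]) =
      (X - 1) ^ p ^ s * (X + 1) ^ p ^ s * (X ^ 2 - X + 1) ^ p ^ s *
        (X ^ 2 + X + 1) ^ p ^ s ∧
    (∀ γ : Rk p m k, γ ^ 2 - γ + 1 ≠ 0) ∧
    (∀ γ : Rk p m k, γ ^ 2 + γ + 1 ≠ 0) ∧
    Nonempty
      (((Rk p m k)[X] ⧸
          Ideal.span {(X : (Rk p m k)[X]) ^ (6 * p ^ s) - 1}) ≃+*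
        ((Rk p m k)[X] ⧸ Ideal.span {((X : (Rk p m k)[X]) - 1) ^ p ^ s}) ×
        ((Rk p m k)[X] ⧸ Ideal.span {((X : (Rk p m k)[X]) + 1) ^ p ^ s}) ×
        ((Rk p m k)[X] ⧸
          Ideal.span {((X : (Rk p m k)[X]) ^ 2 - X + 1) ^ p ^ s}) ×
        ((Rk p m k)[X] ⧸
          Ideal.span {((X : (Rk p m k)[X]) ^ 2 + X + 1) ^ p ^ s})) := by
  set F := GaloisField p m with hF
  set R := Rk p m k with hR
  have hpprime := (Fact.out : p.Prime)
  have hp5 : 5 ≤ p := by omega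
  -- `R` is nontrivial of characteristic `p`
  have hdeg : (X ^ k : F[X]).degree ≠ 0 := by
    rw [degree_X_pow]; exact_mod_cast hk.ne'
  haveI : Nontrivial R := AdjoinRoot.nontrivial _ hdeg
  haveI : CharP R p := charP_of_injective_algebraMap' F (A := R) p
  haveI : CharP R[X] p := Polynomial.instCharP p
  -- Part 1: the factorization
  have part1 : (X ^ (6 * p ^ s) - 1 : R[X]) =
      (X - 1) ^ p ^ s * (X + 1) ^ p ^ s * (X ^ 2 - X + 1) ^ p ^ s *
        (X ^ 2 + X + 1) ^ p ^ s := by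
    have h6 : ((X : R[X]) ^ 6 - 1) =
        (X - 1) * (X + 1) * (X ^ 2 - X + 1) * (X ^ 2 + X + 1) := by ring
    calc (X ^ (6 * p ^ s) - 1 : R[X])
        = ((X : R[X]) ^ 6) ^ p ^ s - 1 ^ p ^ s := by
          rw [one_pow, pow_mul]
      _ = ((X : R[X]) ^ 6 - 1) ^ p ^ s := (sub_pow_char_pow ((X : R[X]) ^ 6) 1 s).symm
      _ = _ := by rw [h6, mul_pow, mul_pow, mul_pow]
  -- no root of x² + x + 1
  have hno3 : ∀ γ : R, γ ^ 2 + γ + 1 ≠ 0 := by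
    -- first, no root in the field F
    have hm0 : m ≠ 0 := hm.pos.ne'
    haveI : Fintype F := Fintype.ofFinite F
    have hcard : Fintype.card F = p ^ m := by
      rw [← Nat.card_eq_fintype_card]; exact GaloisField.card p m hm0
    have h3dvd : ¬ (3 ∣ p ^ m - 1) := by
      have hp3 : p % 3 = 2 := by omega
      obtain ⟨j, hj⟩ := hm
      have h2m : p ^ m % 3 = 2 := by
        rw [Nat.pow_mod, hp3, hj, pow_succ, pow_mul, Nat.mul_mod, Nat.pow_mod]
        norm_num
      have h1 : 1 ≤ p ^ m := Nat.one_le_pow _ _ hpprime.pos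
      omega
    have hp3F : (3 : F) ≠ 0 := by
      intro h
      have h3 : ((3 : ℕ) : F) = 0 := by exact_mod_cast h
      have := (CharP.cast_eq_zero_iff F p 3).mp h3
      have := Nat.le_of_dvd (by norm_num) this
      omega
    have hfield : ∀ a : F, a ^ 2 + a + 1 ≠ 0 := by
      intro a ha
      have hane : a ≠ 0 := by
        rintro rfl
        apply hp3F
        linear_combination (3 : F) * ha
      have h3pow : a ^ 3 = 1 := by linear_combination (a - 1) * ha
      have hq : a ^ (p ^ m - 1) = 1 := by
        rw [← hcard]; exact FiniteField.pow_card_sub_one_eq_one a hane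
      have hd1 : orderOf a ∣ 3 := orderOf_dvd_of_pow_eq_one h3pow
      have hd2 : orderOf a ∣ p ^ m - 1 := orderOf_dvd_of_pow_eq_one hq
      rcases (Nat.prime_three.eq_one_or_self_of_dvd _ hd1) with h | h
      · have ha1 : a = 1 := orderOf_eq_one_iff.mp h
        rw [ha1] at ha
        exact hp3F (by linear_combination ha)
      · exact h3dvd (h ▸ hd2)
    -- transfer to R via the residue map
    have h0 : (X ^ k : F[X]).eval₂ (RingHom.id F) 0 = 0 := by
      simp [hk.ne']
    set φ : R →+* F := AdjoinRoot.lift (RingHom.id F) 0 h0 with hφ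
    intro γ hγ
    apply hfield (φ γ)
    have := congrArg φ hγ
    simpa using this
  refine ⟨part1, fun γ hγ => hno3 (-γ) (by linear_combination hγ), hno3, ?_⟩
  -- the CRT isomorphism
  ·     -- 2 and 3 are units in R[X]
    have h2F : (2 : F) ≠ 0 := by
      intro h
      have h2 : ((2 : ℕ) : F) = 0 := by exact_mod_cast h
      have := (CharP.cast_eq_zero_iff F p 2).mp h2
      have := Nat.le_of_dvd (by norm_num) this
      omega
    have h3F : (3 : F) ≠ 0 := by
      intro h
      have h3 : ((3 : ℕ) : F) = 0 := by exact_mod_cast h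
      have := (CharP.cast_eq_zero_iff F p 3).mp h3
      have := Nat.le_of_dvd (by norm_num) this
      omega
    have hu2 : IsUnit (2 : R[X]) := by
      have := (h2F.isUnit).map ((C : R →+* R[X]).comp (algebraMap F R))
      simpa only [map_ofNat] using this
    have hu3 : IsUnit (3 : R[X]) := by
      have := (h3F.isUnit).map ((C : R →+* R[X]).comp (algebraMap F R))
      simpa only [map_ofNat] using this
    obtain ⟨v2, hv2⟩ := isUnit_iff_exists_inv.mp hu2
    obtain ⟨v3, hv3⟩ := isUnit_iff_exists_inv.mp hu3
    -- pairwise coprimality of the four factors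
    have cAB : IsCoprime ((X : R[X]) - 1) (X + 1) :=
      ⟨-v2, v2, by linear_combination hv2⟩
    have cAC : IsCoprime ((X : R[X]) - 1) (X ^ 2 - X + 1) :=
      ⟨-X, 1, by ring⟩
    have cAD : IsCoprime ((X : R[X]) - 1) (X ^ 2 + X + 1) :=
      ⟨-v3 * (X + 2), v3, by linear_combination hv3⟩
    have cBC : IsCoprime ((X : R[X]) + 1) (X ^ 2 - X + 1) :=
      ⟨-v3 * (X - 2), v3, by linear_combination hv3⟩
    have cBD : IsCoprime ((X : R[X]) + 1) (X ^ 2 + X + 1) :=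
      ⟨-X, 1, by ring⟩
    have cCD : IsCoprime ((X : R[X]) ^ 2 - X + 1) (X ^ 2 + X + 1) :=
      ⟨v2 * (X + 1), -(v2 * (X - 1)), by linear_combination hv2⟩
    set f1 : R[X] := (X - 1) ^ p ^ s with hf1
    set f2 : R[X] := (X + 1) ^ p ^ s with hf2
    set f3 : R[X] := (X ^ 2 - X + 1) ^ p ^ s with hf3
    set f4 : R[X] := (X ^ 2 + X + 1) ^ p ^ s with hf4
    have c1 : IsCoprime f1 (f2 * (f3 * f4)) :=
      (cAB.pow).mul_right ((cAC.pow).mul_right (cAD.pow))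
    have c2 : IsCoprime f2 (f3 * f4) :=
      (cBC.pow).mul_right (cBD.pow)
    have c3 : IsCoprime f3 f4 := cCD.pow
    set I1 := Ideal.span {f1}
    set I2 := Ideal.span {f2}
    set I3 := Ideal.span {f3}
    set I4 := Ideal.span {f4}
    have hI34 : I3 * I4 = Ideal.span {f3 * f4} :=
      Ideal.span_singleton_mul_span_singleton _ _
    have hI234 : I2 * (I3 * I4) = Ideal.span {f2 * (f3 * f4)} := by
      rw [hI34, Ideal.span_singleton_mul_span_singleton]
    have hspan : Ideal.span {(X : R[X]) ^ (6 * p ^ s) - 1} =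
        I1 * (I2 * (I3 * I4)) := by
      rw [part1, hI234, Ideal.span_singleton_mul_span_singleton]
      congr 1
      ring
    have ic1 : IsCoprime I1 (I2 * (I3 * I4)) := by
      rw [hI234]
      exact (Ideal.isCoprime_span_singleton_iff _ _).mpr c1
    have ic2 : IsCoprime I2 (I3 * I4) := by
      rw [hI34]
      exact (Ideal.isCoprime_span_singleton_iff _ _).mpr c2
    have ic3 : IsCoprime I3 I4 :=
      (Ideal.isCoprime_span_singleton_iff _ _).mpr c3
    exact ⟨(Ideal.quotEquivOfEq hspan).trans
      ((Ideal.quotientMulEquivQuotientProd I1 (I2 * (I3 * I4)) ic1).trans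
        ((RingEquiv.refl _).prodCongr
          ((Ideal.quotientMulEquivQuotientProd I2 (I3 * I4) ic2).trans
            ((RingEquiv.refl _).prodCongr
              (Ideal.quotientMulEquivQuotientProd I3 I4 ic3)))))⟩
end

section
/- Let p be an odd prime, m, k, j ∈ ℕ, let F = 𝔽_{p^m}, and let f(x) ∈ F[x] be a monic irreducible polynomial of degree l, regarded as an element of R_k[x]. Set S = R_k[x]/⟨f(x)^j⟩. Then every ideal I of S can be written as I = ∑_{i=1}^{k} S·(u^{i−1} f(x)^{e_i} + ∑_{t=1}^{k−i} u^{i−1+t} r_{i,t}(x)), where: (1) for each 1 ≤ i ≤ k, e_i is an integer with 0 ≤ e_i ≤ j (and f(x)^j = 0 in S, so e_i = j corresponds to a zero leading term); (2) e_k ≤ e_i for all 1 ≤ i ≤ k−1; (3) each r_{i,t}(x) ∈ F[x] is a polynomial of degree less than lj; (4) for each 2 ≤ i ≤ k with e_i < j, one has max_{1 ≤ t ≤ i−1} deg r_{t, i−t}(x) < l·e_i. Moreover, the polynomials r_{i,t}(x) satisfying these conditions are uniquely determined by I. -/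
open Polynomial

set_option maxHeartbeats 1000000

namespace Stmt19Aux
variable {K : Type*} [Field K] {B : Type*} [CommRing B]

noncomputable def phi (ε : K[X] →+* B) (U : B) (k : ℕ) (v : ℕ → K[X]) : B :=
  ∑ i ∈ Finset.range k, U ^ i * ε (v i)

variable {ε : K[X] →+* B} {U : B} {k : ℕ}

lemma phi_congr {v w : ℕ → K[X]} (h : ∀ i < k, v i = w i) : phi ε U k v = phi ε U k w :=
  Finset.sum_congr rfl fun i hi => by rw [h i (Finset.mem_range.mp hi)]

lemma phi_zero : phi ε U k (fun _ => 0) = 0 := by simp [phi]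

lemma phi_sub (v w : ℕ → K[X]) :
    phi ε U k (fun i => v i - w i) = phi ε U k v - phi ε U k w := by
  simp [phi, mul_sub, Finset.sum_sub_distrib]

lemma phi_add (v w : ℕ → K[X]) :
    phi ε U k (fun i => v i + w i) = phi ε U k v + phi ε U k w := by
  simp [phi, mul_add, Finset.sum_add_distrib]

lemma phi_smul (c : K[X]) (v : ℕ → K[X]) :
    phi ε U k (fun i => c * v i) = ε c * phi ε U k v := by
  simp only [phi, map_mul, Finset.mul_sum]
  exact Finset.sum_congr rfl fun i _ => by ring

lemma phi_shift (hU : U ^ k = 0) (v : ℕ → K[X]) :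
    phi ε U k (fun i => if i = 0 then 0 else v (i - 1)) = U * phi ε U k v := by
  cases k with
  | zero => simp [phi]
  | succ n =>
    rw [phi, Finset.sum_range_succ' (fun i => U ^ i * ε (if i = 0 then 0 else v (i - 1)))]
    have h0 : U ^ 0 * ε (if (0:ℕ) = 0 then 0 else v (0 - 1)) = 0 := by simp
    rw [h0, add_zero, phi, Finset.mul_sum, Finset.sum_range_succ]
    rw [show U * (U ^ n * ε (v n)) = U ^ (n + 1) * ε (v n) by ring, hU, zero_mul, add_zero]
    refine Finset.sum_congr rfl fun i _ => ?_
    rw [if_neg (Nat.succ_ne_zero i), Nat.add_sub_cancel]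
    ring

noncomputable def T (f : K[X]) (e : ℕ → ℕ) (r : ℕ → ℕ → K[X]) (k i : ℕ) : ℕ → K[X] :=
  fun a => if a < i - 1 then 0 else if a = i - 1 then f ^ e i
    else if a < k then r i (a - (i - 1)) else 0

theorem main (k j l : ℕ) (hk : 0 < k) (f : K[X]) (hfm : f.Monic) (hfi : Irreducible f)
    (hl : f.natDegree = l) (ε : K[X] →+* B) (U : B) (hU : U ^ k = 0)
    (hfj : ε (f ^ j) = 0)
    (hsurj : ∀ z : B, ∃ v, phi ε U k v = z) (I : Ideal B) :
    ∃ (e : ℕ → ℕ) (r : ℕ → ℕ → K[X]),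
      (∀ i ∈ Finset.Icc 1 k, e i ≤ j) ∧
      (∀ i ∈ Finset.Icc 1 (k - 1), e k ≤ e i) ∧
      (∀ i ∈ Finset.Icc 1 k, ∀ t ∈ Finset.Icc 1 (k - i),
        (r i t).degree < ((l * j : ℕ) : WithBot ℕ)) ∧
      (∀ i ∈ Finset.Icc 2 k, e i < j → ∀ t ∈ Finset.Icc 1 (i - 1),
        (r t (i - t)).degree < ((l * e i : ℕ) : WithBot ℕ)) ∧
      I = Ideal.span ((fun i => phi ε U k (T f e r k i)) '' ↑(Finset.Icc 1 k)) ∧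
      (∀ r' : ℕ → ℕ → K[X],
        (∀ i ∈ Finset.Icc 1 k, ∀ t ∈ Finset.Icc 1 (k - i),
          (r' i t).degree < ((l * j : ℕ) : WithBot ℕ)) →
        (∀ i ∈ Finset.Icc 2 k, e i < j → ∀ t ∈ Finset.Icc 1 (i - 1),
          (r' t (i - t)).degree < ((l * e i : ℕ) : WithBot ℕ)) →
        I = Ideal.span ((fun i => phi ε U k (T f e r' k i)) '' ↑(Finset.Icc 1 k)) →
        ∀ i ∈ Finset.Icc 1 k, ∀ t ∈ Finset.Icc 1 (k - i), r' i t = r i t) := by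
  have hf0 : f ≠ 0 := hfm.ne_zero
  have hdeg : ∀ n : ℕ, (f ^ n).degree = ((l * n : ℕ) : WithBot ℕ) := fun n => by
    rw [degree_eq_natDegree (pow_ne_zero n hf0), natDegree_pow, hl, mul_comm]
  -- the leading ideals
  set Jid : ℕ → Ideal K[X] := fun s =>
    { carrier := {c | ∃ v, phi ε U k v ∈ I ∧ (∀ i < s, v i = 0) ∧ v s = c}
      add_mem' := by
        rintro a b ⟨v, hv, hv0, hvs⟩ ⟨w, hw, hw0, hws⟩
        exact ⟨fun i => v i + w i, by rw [phi_add]; exact I.add_mem hv hw,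
          fun i hi => by show v i + w i = 0; rw [hv0 i hi, hw0 i hi, add_zero],
          by show v s + w s = a + b; rw [hvs, hws]⟩
      zero_mem' := ⟨fun _ => 0, by rw [phi_zero]; exact I.zero_mem, fun _ _ => rfl, rfl⟩
      smul_mem' := by
        rintro c x ⟨v, hv, hv0, hvs⟩
        exact ⟨fun i => c * v i, by rw [phi_smul]; exact I.mul_mem_left _ hv,
          fun i hi => by show c * v i = 0; rw [hv0 i hi, mul_zero],
          by show c * v s = c • x; rw [hvs]; rfl⟩ } with hJid
  have hJmem : ∀ s c, c ∈ Jid s ↔ ∃ v, phi ε U k v ∈ I ∧ (∀ i < s, v i = 0) ∧ v s = c := by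
    intro s c; rw [hJid]; rfl
  have hfjJ : ∀ s, f ^ j ∈ Jid s := by
    intro s
    rw [hJmem]
    refine ⟨fun i => if i = s then f ^ j else 0, ?_, fun i hi => if_neg (by omega), if_pos rfl⟩
    have : phi ε U k (fun i => if i = s then f ^ j else 0) = 0 := by
      refine Finset.sum_eq_zero fun i _ => ?_
      by_cases h : i = s
      · simp [h, hfj]
      · simp [h]
    rw [this]; exact I.zero_mem
  have hE : ∀ s, ∃ e, e ≤ j ∧ Jid s = Ideal.span {f ^ e} := by
    intro s
    obtain ⟨g, hg⟩ := (IsPrincipalIdealRing.principal (Jid s)).principal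
    rw [Ideal.submodule_span_eq] at hg
    have hgd : g ∣ f ^ j := by
      rw [← Ideal.mem_span_singleton, ← hg]; exact hfjJ s
    obtain ⟨e, he, ha⟩ := (dvd_prime_pow hfi.prime j).mp hgd
    exact ⟨e, he, by rw [hg]; exact Ideal.span_singleton_eq_span_singleton.mpr ha⟩
  choose eD heD hspan using hE
  have hmono : ∀ s, eD (s + 1) ≤ eD s := by
    intro s
    have hsub : Jid s ≤ Jid (s + 1) := by
      intro c hc
      rw [hJmem] at hc ⊢
      obtain ⟨v, hvI, hv0, hvs⟩ := hc
      refine ⟨fun i => if i = 0 then 0 else v (i - 1), ?_, ?_, ?_⟩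
      · rw [phi_shift hU]; exact I.mul_mem_left _ hvI
      · intro i hi
        by_cases h : i = 0
        · simp [h]
        · show (if i = 0 then 0 else v (i - 1)) = 0
          rw [if_neg h]; exact hv0 _ (by omega)
      · show (if s + 1 = 0 then 0 else v (s + 1 - 1)) = c
        rw [if_neg (Nat.succ_ne_zero s), Nat.add_sub_cancel, hvs]
    rw [hspan s, hspan (s + 1), Ideal.span_singleton_le_span_singleton] at hsub
    exact (pow_dvd_pow_iff hf0 hfi.not_isUnit).mp hsub
  have hanti : ∀ a b : ℕ, a ≤ b → eD b ≤ eD a := by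
    intro a b h
    induction b, h using Nat.le_induction with
    | base => exact le_refl _
    | succ n hn ih => exact le_trans (hmono n) ih
  -- normalized generator family
  have hGex : ∀ d : ℕ, ∃ G : ℕ → ℕ → K[X], ∀ s, k - d ≤ s → s < k →
      phi ε U k (G s) ∈ I ∧ (∀ i < s, G s i = 0) ∧ G s s = f ^ eD s ∧
      (∀ i, s < i → i < k → (G s i).degree < (f ^ eD i).degree) ∧
      (∀ i, k ≤ i → G s i = 0) := by
    intro d
    induction d with
    | zero => exact ⟨fun _ _ => 0, fun s hs hsk => absurd hs (by omega)⟩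
    | succ d ih =>
      obtain ⟨G, hG⟩ := ih
      by_cases hd : k - (d + 1) = k - d
      · exact ⟨G, fun s hs hsk => hG s (by omega) hsk⟩
      · set s := k - (d + 1) with hsdef
        have hsval : s < k := by omega
        have hs1 : s + 1 = k - d := by omega
        have hmem : f ^ eD s ∈ Jid s := by
          rw [hspan s]; exact Ideal.subset_span rfl
        rw [hJmem] at hmem
        obtain ⟨v, hvI, hv0, hvs⟩ := hmem
        have sweep : ∀ n : ℕ, ∃ w : ℕ → K[X], phi ε U k w ∈ I ∧ (∀ i < s, w i = 0) ∧
            w s = f ^ eD s ∧ ∀ i, s < i → i < s + 1 + n → i < k →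
              (w i).degree < (f ^ eD i).degree := by
          intro n
          induction n with
          | zero => exact ⟨v, hvI, hv0, hvs, fun i h1 h2 _ => absurd h2 (by omega)⟩
          | succ n ihn =>
            obtain ⟨w, hwI, hw0, hws, hwd⟩ := ihn
            set b := s + 1 + n with hbdef
            by_cases hbk : b < k
            · have hGb := hG b (by omega) hbk
              set q := w b /ₘ f ^ eD b with hqdef
              refine ⟨fun i => w i - q * G b i, ?_, ?_, ?_, ?_⟩
              · rw [phi_sub w (fun i => q * G b i), phi_smul]
                exact I.sub_mem hwI (I.mul_mem_left _ hGb.1)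
              · intro i hi
                show w i - q * G b i = 0
                rw [hw0 i hi, hGb.2.1 i (by omega), mul_zero, sub_zero]
              · show w s - q * G b s = f ^ eD s
                rw [hws, hGb.2.1 s (by omega), mul_zero, sub_zero]
              · intro i h1 h2 h3
                show (w i - q * G b i).degree < (f ^ eD i).degree
                rcases Nat.lt_or_ge i b with hib | hib
                · rw [hGb.2.1 i hib, mul_zero, sub_zero]
                  exact hwd i h1 (by omega) h3
                · have hieq : i = b := by omega
                  rw [hieq, hGb.2.2.1, mul_comm, ← modByMonic_eq_sub_mul_div (w b) (f ^ eD b)]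
                  exact degree_modByMonic_lt (w b) (hfm.pow _)
            · exact ⟨w, hwI, hw0, hws, fun i h1 h2 h3 => hwd i h1 (by omega) h3⟩
        obtain ⟨w, hwI, hw0, hws, hwd⟩ := sweep (k - (s + 1))
        refine ⟨Function.update G s (fun i => if i < k then w i else 0), fun s' hs' hs'k => ?_⟩
        by_cases h : s' = s
        · subst h
          rw [Function.update_self]
          refine ⟨?_, ?_, ?_, ?_, ?_⟩
          · have : phi ε U k (fun i => if i < k then w i else 0) = phi ε U k w :=
              phi_congr fun i hi => if_pos hi
            rw [this]; exact hwI
          · intro i hi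
            show (if i < k then w i else 0) = 0
            rw [if_pos (by omega)]; exact hw0 i hi
          · show (if s < k then w s else 0) = f ^ eD s
            rw [if_pos hs'k]; exact hws
          · intro i h1 h2
            show (if i < k then w i else 0).degree < (f ^ eD i).degree
            rw [if_pos h2]
            exact hwd i h1 (by omega) h2
          · intro i hi
            show (if i < k then w i else 0) = 0
            rw [if_neg (by omega)]
        · rw [Function.update_of_ne h]
          exact hG s' (by omega) hs'k
  obtain ⟨G, hG⟩ := hGex k
  have hGall : ∀ s, s < k →
      phi ε U k (G s) ∈ I ∧ (∀ i < s, G s i = 0) ∧ G s s = f ^ eD s ∧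
      (∀ i, s < i → i < k → (G s i).degree < (f ^ eD i).degree) ∧
      (∀ i, k ≤ i → G s i = 0) := fun s hs => hG s (by omega) hs
  set e : ℕ → ℕ := fun i => eD (i - 1) with hedef
  set r : ℕ → ℕ → K[X] :=
    fun i t => if 1 ≤ i ∧ i ≤ k ∧ 1 ≤ t ∧ t ≤ k - i then G (i - 1) (i - 1 + t) else 0 with hrdef
  have hT : ∀ i ∈ Finset.Icc 1 k, T f e r k i = G (i - 1) := by
    intro i hi
    rw [Finset.mem_Icc] at hi
    funext a
    have hGi := hGall (i - 1) (by omega)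
    simp only [T]
    by_cases h1 : a < i - 1
    · rw [if_pos h1]; exact (hGi.2.1 a h1).symm
    · rw [if_neg h1]
      by_cases h2 : a = i - 1
      · rw [if_pos h2, h2]; exact hGi.2.2.1.symm
      · rw [if_neg h2]
        by_cases h3 : a < k
        · rw [if_pos h3]
          simp only [hrdef]
          rw [if_pos ⟨hi.1, hi.2, by omega, by omega⟩]
          have : i - 1 + (a - (i - 1)) = a := by omega
          rw [this]
        · rw [if_neg h3]; exact (hGi.2.2.2.2 a (by omega)).symm
  have himg : ((fun i => phi ε U k (T f e r k i)) '' ↑(Finset.Icc 1 k)) =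
      ((fun i => phi ε U k (G (i - 1))) '' ↑(Finset.Icc 1 k)) := by
    apply Set.image_congr
    intro i hi
    rw [hT i hi]
  have hIspan : I = Ideal.span ((fun i => phi ε U k (G (i - 1))) '' ↑(Finset.Icc 1 k)) := by
    apply le_antisymm
    · have hred : ∀ d : ℕ, ∀ v : ℕ → K[X], phi ε U k v ∈ I → (∀ i < k - d, v i = 0) →
          phi ε U k v ∈ Ideal.span ((fun i => phi ε U k (G (i - 1))) '' ↑(Finset.Icc 1 k)) := by
        intro d
        induction d with
        | zero =>
          intro v hv hv0
          have hz : phi ε U k v = 0 := by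
            refine Finset.sum_eq_zero fun i hi => ?_
            rw [hv0 i (by have := Finset.mem_range.mp hi; omega), map_zero, mul_zero]
          rw [hz]; exact Ideal.zero_mem _
        | succ d ih =>
          intro v hv hv0
          by_cases hd : k - (d + 1) = k - d
          · exact ih v hv (fun i hi => hv0 i (by omega))
          · set s := k - (d + 1) with hsdef
            have hsk : s < k := by omega
            have hvJ : v s ∈ Jid s := by
              rw [hJmem]; exact ⟨v, hv, fun i hi => hv0 i (by omega), rfl⟩
            rw [hspan s, Ideal.mem_span_singleton] at hvJ
            obtain ⟨c, hc⟩ := hvJ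
            have hGs := hGall s hsk
            have hsub : phi ε U k (fun i => v i - c * G s i) =
                phi ε U k v - ε c * phi ε U k (G s) := by
              rw [phi_sub v (fun i => c * G s i), phi_smul]
            have h1 : phi ε U k (fun i => v i - c * G s i) ∈ I := by
              rw [hsub]; exact I.sub_mem hv (I.mul_mem_left _ hGs.1)
            have h2 : ∀ i < k - d, (fun i => v i - c * G s i) i = 0 := by
              intro i hi
              show v i - c * G s i = 0
              rcases Nat.lt_or_ge i s with h | h
              · rw [hv0 i (by omega), hGs.2.1 i h, mul_zero, sub_zero]
              · have hie : i = s := by omega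
                rw [hie, hc, hGs.2.2.1]; ring
            have h3 := ih _ h1 h2
            have hGspan : phi ε U k (G s) ∈
                Ideal.span ((fun i => phi ε U k (G (i - 1))) '' ↑(Finset.Icc 1 k)) :=
              Ideal.subset_span ⟨s + 1, by simp only [Finset.coe_Icc, Set.mem_Icc]; omega, rfl⟩
            have hfin : phi ε U k v =
                phi ε U k (fun i => v i - c * G s i) + ε c * phi ε U k (G s) := by
              rw [hsub]; ring
            rw [hfin]
            exact Ideal.add_mem _ h3 (Ideal.mul_mem_left _ _ hGspan)
      intro z hz
      obtain ⟨v, rfl⟩ := hsurj z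
      exact hred k v hz (fun i hi => absurd hi (by omega))
    · rw [Ideal.span_le]
      rintro z ⟨i, hi, rfl⟩
      simp only [Finset.coe_Icc, Set.mem_Icc] at hi
      exact (hGall (i - 1) (by omega)).1
  refine ⟨e, r, ?_, ?_, ?_, ?_, ?_, ?_⟩
  · intro i _
    exact heD (i - 1)
  · intro i hi
    rw [Finset.mem_Icc] at hi
    exact hanti (i - 1) (k - 1) (by omega)
  · intro i hi t ht
    rw [Finset.mem_Icc] at hi ht
    simp only [hrdef]
    rw [if_pos ⟨hi.1, hi.2, ht.1, ht.2⟩]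
    have hd := (hGall (i - 1) (by omega)).2.2.2.1 (i - 1 + t) (by omega) (by omega)
    rw [hdeg] at hd
    refine lt_of_lt_of_le hd ?_
    exact_mod_cast Nat.mul_le_mul_left l (heD (i - 1 + t))
  · intro i hi hij t ht
    rw [Finset.mem_Icc] at hi ht
    simp only [hrdef]
    rw [if_pos ⟨ht.1, by omega, by omega, by omega⟩]
    have harw : t - 1 + (i - t) = i - 1 := by omega
    rw [harw]
    have hd := (hGall (t - 1) (by omega)).2.2.2.1 (i - 1) (by omega) (by omega)
    rw [hdeg] at hd
    exact hd
  · rw [himg]; exact hIspan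
  · intro r' hC3' hC4' hspan' i hi t ht
    rw [Finset.mem_Icc] at hi ht
    have hG'mem : ∀ s, s < k → phi ε U k (T f e r' k (s + 1)) ∈ I := by
      intro s hs
      rw [hspan']
      exact Ideal.subset_span ⟨s + 1, by simp only [Finset.coe_Icc, Set.mem_Icc]; omega, rfl⟩
    have hcoord : ∀ a, a < k → ∀ s, s < k → s < a → T f e r' k (s + 1) a = G s a := by
      intro a
      induction a using Nat.strong_induction_on with
      | _ a ihn =>
        intro hak s hsk hsa
        have hDmem : T f e r' k (s + 1) a - G s a ∈ Jid a := by
          rw [hJmem]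
          refine ⟨fun i0 => T f e r' k (s + 1) i0 - G s i0, ?_, ?_, rfl⟩
          · rw [phi_sub]
            exact I.sub_mem (hG'mem s hsk) (hGall s hsk).1
          · intro i0 hi0
            show T f e r' k (s + 1) i0 - G s i0 = 0
            rcases Nat.lt_or_ge i0 s with h | h
            · rw [(hGall s hsk).2.1 i0 h]
              simp only [T]
              rw [if_pos (by omega : i0 < s + 1 - 1)]
              simp
            · rcases Nat.eq_or_lt_of_le h with h' | h'
              · simp only [T]
                rw [if_neg (by omega), if_pos (by omega : i0 = s + 1 - 1)]
                rw [← h', (hGall s hsk).2.2.1]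
                show f ^ eD s - f ^ eD s = 0
                ring
              · rw [ihn i0 hi0 (by omega) s hsk h', sub_self]
        rw [hspan a, Ideal.mem_span_singleton] at hDmem
        have hTa : T f e r' k (s + 1) a = r' (s + 1) (a - s) := by
          simp only [T]
          rw [if_neg (by omega), if_neg (by omega), if_pos hak]
          congr 1 <;> omega
        have hda : (T f e r' k (s + 1) a).degree < (f ^ eD a).degree := by
          rw [hTa, hdeg]
          by_cases hea : eD a < j
          · have hh := hC4' (a + 1) (by simp only [Finset.mem_Icc]; omega)
              (show e (a + 1) < j from hea) (s + 1) (by simp only [Finset.mem_Icc]; omega)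
            have harw : a + 1 - (s + 1) = a - s := by omega
            rw [harw] at hh
            exact hh
          · have hea' : eD a = j := by have := heD a; omega
            have hh := hC3' (s + 1) (by simp only [Finset.mem_Icc]; omega) (a - s)
              (by simp only [Finset.mem_Icc]; omega)
            rw [hea']
            exact hh
        have hga : (G s a).degree < (f ^ eD a).degree := (hGall s hsk).2.2.2.1 a hsa hak
        have hsub2 : T f e r' k (s + 1) a = G s a := by
          by_contra hne
          have hne' : T f e r' k (s + 1) a - G s a ≠ 0 := sub_ne_zero.mpr hne
          have hle := degree_le_of_dvd hDmem hne'
          have hlt : (T f e r' k (s + 1) a - G s a).degree < (f ^ eD a).degree :=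
            lt_of_le_of_lt (degree_sub_le _ _) (max_lt hda hga)
          exact absurd (lt_of_le_of_lt hle hlt) (lt_irrefl _)
        exact hsub2
    have hik : i - 1 + t < k := by omega
    have h1 := hcoord (i - 1 + t) hik (i - 1) (by omega) (by omega)
    have hieq : i - 1 + 1 = i := by omega
    rw [hieq] at h1
    have h2 : T f e r' k i (i - 1 + t) = r' i t := by
      simp only [T]
      rw [if_neg (by omega), if_neg (by omega), if_pos (by omega)]
      congr 1 <;> omega
    have h3 : r i t = G (i - 1) (i - 1 + t) := by
      simp only [hrdef]
      rw [if_pos ⟨hi.1, hi.2, ht.1, ht.2⟩]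
    rw [← h2, h1, ← h3]

end Stmt19Aux

/-- Classification of the ideals of `S = R_k[x]/⟨f(x)^j⟩` for a monic irreducible
`f ∈ 𝔽_{p^m}[x]` of degree `l`: every ideal `I` of `S` is generated by the `k`
elements `u^{i-1} f^{e_i} + ∑_{t=1}^{k-i} u^{i-1+t} r_{i,t}(x)` (`1 ≤ i ≤ k`)
with `0 ≤ e_i ≤ j`, `e_k ≤ e_i`, `deg r_{i,t} < lj`, and for `2 ≤ i ≤ k` with
`e_i < j`, `max_{1 ≤ t ≤ i-1} deg r_{t,i−t} < l·e_i`; moreover the `r_{i,t}`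
satisfying these conditions are uniquely determined by `I`. -/
theorem stmt_19 (p m k j : ℕ) [Fact p.Prime] (hp : Odd p)
    (hm : 0 < m) (hk : 0 < k) (hj : 0 < j)
    (f : (GaloisField p m)[X]) (hfm : f.Monic) (hfi : Irreducible f)
    (l : ℕ) (hl : f.natDegree = l)
    (I : Ideal ((Rk p m k)[X] ⧸ Ideal.span {(f.map (ofFq p m k)) ^ j})) :
    ∃ (e : ℕ → ℕ) (r : ℕ → ℕ → (GaloisField p m)[X]),
      (∀ i ∈ Finset.Icc 1 k, e i ≤ j) ∧
      (∀ i ∈ Finset.Icc 1 (k - 1), e k ≤ e i) ∧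
      (∀ i ∈ Finset.Icc 1 k, ∀ t ∈ Finset.Icc 1 (k - i),
        (r i t).degree < ((l * j : ℕ) : WithBot ℕ)) ∧
      (∀ i ∈ Finset.Icc 2 k, e i < j → ∀ t ∈ Finset.Icc 1 (i - 1),
        (r t (i - t)).degree < ((l * e i : ℕ) : WithBot ℕ)) ∧
      I = Ideal.span
        ((fun i => Ideal.Quotient.mk (Ideal.span {(f.map (ofFq p m k)) ^ j})
            (C (uRk p m k) ^ (i - 1) * (f.map (ofFq p m k)) ^ e i +
              ∑ t ∈ Finset.Icc 1 (k - i),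
                C (uRk p m k) ^ (i - 1 + t) * (r i t).map (ofFq p m k))) ''
          ↑(Finset.Icc 1 k)) ∧
      (∀ r' : ℕ → ℕ → (GaloisField p m)[X],
        (∀ i ∈ Finset.Icc 1 k, ∀ t ∈ Finset.Icc 1 (k - i),
          (r' i t).degree < ((l * j : ℕ) : WithBot ℕ)) →
        (∀ i ∈ Finset.Icc 2 k, e i < j → ∀ t ∈ Finset.Icc 1 (i - 1),
          (r' t (i - t)).degree < ((l * e i : ℕ) : WithBot ℕ)) →
        I = Ideal.span
          ((fun i => Ideal.Quotient.mk (Ideal.span {(f.map (ofFq p m k)) ^ j})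
              (C (uRk p m k) ^ (i - 1) * (f.map (ofFq p m k)) ^ e i +
                ∑ t ∈ Finset.Icc 1 (k - i),
                  C (uRk p m k) ^ (i - 1 + t) * (r' i t).map (ofFq p m k))) ''
            ↑(Finset.Icc 1 k)) →
        ∀ i ∈ Finset.Icc 1 k, ∀ t ∈ Finset.Icc 1 (k - i), r' i t = r i t) := by
  classical
  let mkQ : (Rk p m k)[X] →+* ((Rk p m k)[X] ⧸ Ideal.span {(f.map (ofFq p m k)) ^ j}) :=
    Ideal.Quotient.mk (Ideal.span {(f.map (ofFq p m k)) ^ j})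
  let ε : (GaloisField p m)[X] →+* ((Rk p m k)[X] ⧸ Ideal.span {(f.map (ofFq p m k)) ^ j}) :=
    mkQ.comp (mapRingHom (ofFq p m k))
  let U : (Rk p m k)[X] ⧸ Ideal.span {(f.map (ofFq p m k)) ^ j} := mkQ (C (uRk p m k))
  have hu : (uRk p m k) ^ k = 0 := by
    have h1 := AdjoinRoot.eval₂_root (X ^ k : (GaloisField p m)[X])
    simpa using h1
  have hU : U ^ k = 0 := by
    show mkQ (C (uRk p m k)) ^ k = 0
    rw [← map_pow, ← C_pow, hu, C_0, map_zero]
  have hfj : ε (f ^ j) = 0 := by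
    show mkQ ((f ^ j).map (ofFq p m k)) = 0
    rw [Polynomial.map_pow]
    exact Ideal.Quotient.eq_zero_iff_mem.mpr (Ideal.subset_span rfl)
  have hphi : ∀ v : ℕ → (GaloisField p m)[X], Stmt19Aux.phi ε U k v =
      mkQ (∑ a ∈ Finset.range k, C (uRk p m k) ^ a * (v a).map (ofFq p m k)) := by
    intro v
    rw [map_sum]
    unfold Stmt19Aux.phi
    refine Finset.sum_congr rfl fun a _ => ?_
    rw [map_mul, map_pow]
    rfl
  have hRk : ∀ a : Rk p m k, ∃ c : ℕ → GaloisField p m,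
      a = ∑ i ∈ Finset.range k, ofFq p m k (c i) * uRk p m k ^ i := by
    intro a
    obtain ⟨P, rfl⟩ := AdjoinRoot.mk_surjective a
    set P' := P %ₘ (X ^ k) with hP'
    have hmkeq : AdjoinRoot.mk (X ^ k : (GaloisField p m)[X]) P = AdjoinRoot.mk _ P' := by
      rw [AdjoinRoot.mk_eq_mk]
      exact ⟨P /ₘ X ^ k, by rw [hP', modByMonic_eq_sub_mul_div P (X ^ k)]; ring⟩
    have hdeg' : P'.natDegree < k := by
      have h1 : P'.degree < (X ^ k : (GaloisField p m)[X]).degree :=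
        degree_modByMonic_lt P (monic_X_pow k)
      rw [degree_X_pow] at h1
      by_cases h0 : P' = 0
      · rw [h0]; simpa using hk
      · exact (natDegree_lt_iff_degree_lt h0).mpr h1
    refine ⟨fun i => P'.coeff i, ?_⟩
    rw [hmkeq, ← AdjoinRoot.aeval_eq, Polynomial.aeval_eq_sum_range' hdeg']
    refine Finset.sum_congr rfl fun i _ => ?_
    rw [Algebra.smul_def, AdjoinRoot.algebraMap_eq]
  have hsurj : ∀ z : (Rk p m k)[X] ⧸ Ideal.span {(f.map (ofFq p m k)) ^ j},
      ∃ v, Stmt19Aux.phi ε U k v = z := by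
    intro z
    obtain ⟨P, rfl⟩ := Ideal.Quotient.mk_surjective z
    induction P using Polynomial.induction_on' with
    | add pp qq hp hq =>
      obtain ⟨v, hv⟩ := hp
      obtain ⟨w, hw⟩ := hq
      exact ⟨fun i => v i + w i, by rw [Stmt19Aux.phi_add, hv, hw, ← map_add]⟩
    | monomial n a =>
      obtain ⟨c, hc⟩ := hRk a
      refine ⟨fun i => C (c i) * X ^ n, ?_⟩
      rw [hphi]
      have hCa : (C a : (Rk p m k)[X]) =
          ∑ i ∈ Finset.range k, C (ofFq p m k (c i)) * C (uRk p m k) ^ i := by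
        rw [hc, map_sum]
        refine Finset.sum_congr rfl fun i _ => ?_
        rw [map_mul, map_pow]
      have hpoly : ∑ a0 ∈ Finset.range k,
          C (uRk p m k) ^ a0 * ((C (c a0) * X ^ n).map (ofFq p m k)) =
          (monomial n a : (Rk p m k)[X]) := by
        rw [← C_mul_X_pow_eq_monomial, hCa, Finset.sum_mul]
        refine Finset.sum_congr rfl fun i _ => ?_
        rw [Polynomial.map_mul, Polynomial.map_C, Polynomial.map_pow, Polynomial.map_X]
        ring
      exact congrArg mkQ hpoly
  obtain ⟨e, r, hC1, hC2, hC3, hC4, hspanA, huniqA⟩ :=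
    Stmt19Aux.main k j l hk f hfm hfi hl ε U hU hfj hsurj I
  have hbridge : ∀ (r0 : ℕ → ℕ → (GaloisField p m)[X]), ∀ i ∈ Finset.Icc 1 k,
      Stmt19Aux.phi ε U k (Stmt19Aux.T f e r0 k i) =
      Ideal.Quotient.mk (Ideal.span {(f.map (ofFq p m k)) ^ j})
        (C (uRk p m k) ^ (i - 1) * (f.map (ofFq p m k)) ^ e i +
          ∑ t ∈ Finset.Icc 1 (k - i),
            C (uRk p m k) ^ (i - 1 + t) * (r0 i t).map (ofFq p m k)) := by
    intro r0 i hi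
    rw [Finset.mem_Icc] at hi
    rw [hphi]
    refine congrArg mkQ ?_
    rw [Finset.range_eq_Ico, ← Finset.sum_Ico_consecutive _ (Nat.zero_le i) hi.2]
    congr 1
    · rw [← Finset.range_eq_Ico]
      rw [Finset.sum_eq_single_of_mem (i - 1) (Finset.mem_range.mpr (by omega))]
      · simp only [Stmt19Aux.T]
        simp [Polynomial.map_pow]
      · intro b hb hne
        have hb' : b < i - 1 := by have := Finset.mem_range.mp hb; omega
        simp only [Stmt19Aux.T]
        rw [if_pos hb', Polynomial.map_zero, mul_zero]
    · have hmap : Finset.Ico i k =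
          (Finset.Icc 1 (k - i)).map ⟨fun t => i - 1 + t, add_right_injective (i - 1)⟩ := by
        ext b
        simp only [Finset.mem_Ico, Finset.mem_map, Finset.mem_Icc, Function.Embedding.coeFn_mk]
        constructor
        · intro hb; exact ⟨b - i + 1, by omega, by omega⟩
        · rintro ⟨t, ht, rfl⟩; omega
      rw [hmap, Finset.sum_map]
      refine Finset.sum_congr rfl fun t ht => ?_
      rw [Finset.mem_Icc] at ht
      simp only [Function.Embedding.coeFn_mk, Stmt19Aux.T]
      rw [if_neg (by omega), if_neg (by omega), if_pos (by omega)]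
      have harw : i - 1 + t - (i - 1) = t := by omega
      rw [harw]
  refine ⟨e, r, hC1, hC2, hC3, hC4, ?_, ?_⟩
  · rw [hspanA]
    congr 1
    apply Set.image_congr
    intro i hi
    exact hbridge r i (Finset.mem_coe.mp hi)
  · intro r' h3' h4' hsp'
    refine huniqA r' h3' h4' ?_
    rw [hsp']
    congr 1
    apply Set.image_congr
    intro i hi
    exact (hbridge r' i (Finset.mem_coe.mp hi)).symm
end
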